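/- arXiv:1309.7417 — 11 statements merged into one kernel-verified Lean document; each statement's English description precedes it below -/
import Mathlib

section
/- Let n ≥ 1 and suppose B and B' are weakly nonsingular n×n integer matrices, and Δ, Δ' are n×n real diagonal matrices with strictly positive diagonal entries. If BΔ = B'Δ' (coercing the integer matrices to real matrices), then Δ = Δ' and B = B'. -/
/-
Comparing `BΔ = B'Δ'` column by column, the `j`-th columns `u`, `v` of `B`, `B'` satisfy
`u δⱼ = v δ'ⱼ`. Fixing an index `k` with `u k ≠ 0`, this gives the integer relation
`v k • u = u k • v`; taking gcds of both sides and using that `u` and `v` are unimodular yields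
`|v k| = |u k|`, and positivity of `δⱼ, δ'ⱼ` forces `v k = u k`, hence `u = v` and `δⱼ = δ'ⱼ`.
-/

/-- An `n × n` integer matrix is weakly nonsingular if it has rank `n` and
every column is unimodular (the gcd of the entries of each column is `1`). -/
def WeaklyNonsingular {n : ℕ} (B : Matrix (Fin n) (Fin n) ℤ) : Prop :=
  B.rank = n ∧ ∀ j : Fin n, Finset.univ.gcd (fun i => B i j) = 1

theorem Finset.abs_eq_abs_of_mul_eq_mul_of_gcd_eq_one {ι : Type*} {s : Finset ι}
    {u v : ι → ℤ} (hu : s.gcd u = 1) (hv : s.gcd v = 1) {a b : ℤ}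
    (h : ∀ i ∈ s, a * u i = b * v i) : |a| = |b| := by
  calc |a| = s.gcd (fun i => a * u i) := by
        rw [Finset.gcd_mul_left, hu, mul_one, Int.abs_eq_normalize]
    _ = s.gcd (fun i => b * v i) := Finset.gcd_congr rfl h
    _ = |b| := by rw [Finset.gcd_mul_left, hv, mul_one, Int.abs_eq_normalize]

theorem Int.eq_of_gcd_eq_one_of_cast_mul_eq {ι : Type*} [Fintype ι] {u v : ι → ℤ}
    (hu : Finset.univ.gcd u = 1) (hv : Finset.univ.gcd v = 1) {d d' : ℝ}
    (hd : 0 < d) (hd' : 0 < d') (h : ∀ i, (u i : ℝ) * d = v i * d') :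
    d = d' ∧ u = v := by
  obtain ⟨k, hk⟩ : ∃ k, u k ≠ 0 := by
    by_contra! hzero
    rw [Finset.gcd_eq_zero_iff.mpr fun i _ => hzero i] at hu
    exact zero_ne_one hu
  have hcross : ∀ i, v k * u i = u k * v i := by
    intro i
    have : ((v k * u i : ℤ) : ℝ) * d = ((u k * v i : ℤ) : ℝ) * d := by
      push_cast
      linear_combination (v k : ℝ) * h i - (v i : ℝ) * h k
    exact_mod_cast mul_right_cancel₀ hd.ne' this
  have hkR : (u k : ℝ) ≠ 0 := by exact_mod_cast hk
  have hsame : v k = u k := by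
    rcases abs_eq_abs.mp
        (Finset.abs_eq_abs_of_mul_eq_mul_of_gcd_eq_one hu hv fun i _ => hcross i) with hpos | hneg
    · exact hpos
    · have hsum : (u k : ℝ) * (d + d') = 0 := by
        have := h k
        rw [hneg] at this
        push_cast at this
        linarith
      exact absurd hsum (mul_ne_zero hkR (by positivity))
  refine ⟨mul_left_cancel₀ hkR ?_, funext fun i => mul_left_cancel₀ hk ?_⟩
  · rw [h k, hsame]
  · rw [← hcross i, hsame]

theorem stmt0_general {n : ℕ} (B B' : Matrix (Fin n) (Fin n) ℤ)
    (hB : WeaklyNonsingular B) (hB' : WeaklyNonsingular B')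
    (δ δ' : Fin n → ℝ) (hδ : ∀ i, 0 < δ i) (hδ' : ∀ i, 0 < δ' i)
    (h : B.map (Int.cast : ℤ → ℝ) * Matrix.diagonal δ
        = B'.map (Int.cast : ℤ → ℝ) * Matrix.diagonal δ') :
    δ = δ' ∧ B = B' := by
  have hcol : ∀ j, δ j = δ' j ∧ (fun i => B i j) = fun i => B' i j := fun j =>
    Int.eq_of_gcd_eq_one_of_cast_mul_eq (hB.2 j) (hB'.2 j) (hδ j) (hδ' j) fun i => by
      simpa [Matrix.mul_diagonal] using congrFun (congrFun h i) j
  exact ⟨funext fun j => (hcol j).1, Matrix.ext fun i j => congrFun (hcol j).2 i⟩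

theorem stmt0 {n : ℕ} (hn : 1 ≤ n) (B B' : Matrix (Fin n) (Fin n) ℤ)
    (hB : WeaklyNonsingular B) (hB' : WeaklyNonsingular B')
    (δ δ' : Fin n → ℝ) (hδ : ∀ i, 0 < δ i) (hδ' : ∀ i, 0 < δ' i)
    (h : B.map (Int.cast : ℤ → ℝ) * Matrix.diagonal δ
        = B'.map (Int.cast : ℤ → ℝ) * Matrix.diagonal δ') :
    δ = δ' ∧ B = B' :=
  stmt0_general B B' hB hB' δ δ' hδ hδ' h
end

section
/- For every weakly nonsingular n×n integer matrix B there exists exactly one weakly nonsingular n×n integer matrix C such that CᵀB is a diagonal matrix with strictly positive diagonal entries. (This C is called the opposite B^op of B.) -/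
/-
The rows of `sign (det B) • adj B` are integer vectors `w` with `w ᵥ* B = |det B| eⱼ`. Dividing each
by the gcd of its entries gives unimodular columns `cⱼ` with `cⱼ ᵥ* B = aⱼ eⱼ`, `aⱼ > 0`; these are
the columns of the opposite matrix. For uniqueness, two such columns `c, c'` (with factors `a, a'`)
satisfy `(a' • c - a • c') ᵥ* B = 0`, so `a' • c = a • c'` since `det B ≠ 0`, and comparing the gcds
of both sides gives `a' = a` and hence `c = c'`.
-/

open Matrix

namespace Int

variable {ι : Type*} [Fintype ι]

theorem exists_pos_smul_gcd_eq_one {v : ι → ℤ} (hv : v ≠ 0) :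
    ∃ g : ℤ, 0 < g ∧ ∃ c : ι → ℤ, Finset.univ.gcd c = 1 ∧ v = g • c := by
  obtain ⟨i, hi⟩ := Function.ne_iff.1 hv
  have hg : Finset.univ.gcd v ≠ 0 := fun h =>
    hi (Finset.gcd_eq_zero_iff.1 h i (Finset.mem_univ i))
  refine ⟨Finset.univ.gcd v, (nonneg_of_normalize_eq_self Finset.normalize_gcd).lt_of_ne' hg,
    fun j => v j / Finset.univ.gcd v, Finset.gcd_div_eq_one (Finset.mem_univ i) hi, ?_⟩
  ext j
  exact (Int.mul_ediv_cancel' (Finset.gcd_dvd (Finset.mem_univ j))).symm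

theorem gcd_smul_of_gcd_eq_one {b : ℤ} {w : ι → ℤ} (hb : 0 < b) (hw : Finset.univ.gcd w = 1) :
    Finset.univ.gcd (b • w) = b := by
  simp only [Pi.smul_def, smul_eq_mul]
  rw [Finset.gcd_mul_left, hw, mul_one, normalize_of_nonneg hb.le]

theorem eq_of_smul_eq_smul_of_gcd_eq_one {c c' : ι → ℤ} {a a' : ℤ} (ha : 0 < a) (ha' : 0 < a')
    (hc : Finset.univ.gcd c = 1) (hc' : Finset.univ.gcd c' = 1) (h : a • c = a' • c') :
    c = c' := by
  obtain rfl : a = a' := by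
    rw [← gcd_smul_of_gcd_eq_one ha hc, h, gcd_smul_of_gcd_eq_one ha' hc']
  exact smul_right_injective _ ha.ne' h

end Int

namespace Matrix

theorem det_ne_zero_of_rank_eq_card {m R : Type*} [Fintype m] [DecidableEq m] [CommRing R]
    [IsDomain R] {A : Matrix m m R} (h : A.rank = Fintype.card m) : A.det ≠ 0 := by
  have hrange : Module.rank R (LinearMap.range A.mulVecLin) = Fintype.card m := by
    rw [← h, rank, Module.finrank, Cardinal.cast_toNat_of_lt_aleph0]
    exact (Submodule.rank_le _).trans_lt (Module.rank_lt_aleph0 R (m → R))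
  have hker : LinearMap.ker A.mulVecLin = ⊥ := by
    have hsum := LinearMap.rank_range_add_rank_ker A.mulVecLin
    rw [hrange, rank_fun', add_comm, ← zero_add (Fintype.card m : Cardinal), ← add_assoc,
      add_zero, Cardinal.add_right_inj_of_lt_aleph0 Cardinal.natCast_lt_aleph0] at hsum
    exact Submodule.rank_eq_zero.1 hsum
  rw [Ne, ← exists_mulVec_eq_zero_iff]
  rintro ⟨v, hv, hAv⟩
  exact hv (LinearMap.ker_eq_bot'.1 hker v hAv)

theorem transpose_mul_eq_diagonal_iff {m R : Type*} [Fintype m] [DecidableEq m] [Semiring R]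
    {C B : Matrix m m R} {d : m → R} :
    Cᵀ * B = diagonal d ↔ ∀ j, C.col j ᵥ* B = Pi.single j (d j) := by
  simp only [← row_diagonal, ← funext_iff]
  rfl

variable {m : Type*} [Fintype m] [DecidableEq m] {B : Matrix m m ℤ}

theorem exists_gcd_eq_one_vecMul_eq_single (hB : B.det ≠ 0) (j : m) :
    ∃ c : m → ℤ, Finset.univ.gcd c = 1 ∧ ∃ a : ℤ, 0 < a ∧ c ᵥ* B = Pi.single j a := by
  have habs : 0 < |B.det| := abs_pos.2 hB
  have hw : (B.det.sign • B.adjugate j) ᵥ* B = Pi.single j |B.det| := by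
    rw [smul_vecMul, ← mul_apply_eq_vecMul, adjugate_mul]
    ext k
    rcases eq_or_ne k j with rfl | hk
    · simp only [Pi.smul_apply, smul_apply, one_apply_eq, Pi.single_eq_same, smul_eq_mul,
        mul_one, Int.sign_mul_self_eq_abs]
    · simp only [Pi.smul_apply, smul_apply, one_apply_ne hk.symm, Pi.single_eq_of_ne hk,
        smul_zero]
  obtain ⟨g, hg, c, hc, hgc⟩ := Int.exists_pos_smul_gcd_eq_one (v := B.det.sign • B.adjugate j)
    fun h0 => by simp [h0, eq_comm, habs.ne'] at hw
  have hgcB : ∀ k, g * (c ᵥ* B) k = (Pi.single j |B.det| : m → ℤ) k := fun k => by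
    rw [← hw, hgc, smul_vecMul]; rfl
  refine ⟨c, hc, (c ᵥ* B) j, ?_, ?_⟩
  · refine pos_of_mul_pos_right ?_ hg.le
    rwa [hgcB, Pi.single_eq_same]
  · ext k
    rcases eq_or_ne k j with rfl | hk
    · rw [Pi.single_eq_same]
    · have hk' := hgcB k
      rw [Pi.single_eq_of_ne hk] at hk' ⊢
      exact (mul_eq_zero.1 hk').resolve_left hg.ne'

theorem eq_of_vecMul_eq_single_of_gcd_eq_one (hB : B.det ≠ 0) {j : m} {c c' : m → ℤ}
    {a a' : ℤ} (ha : 0 < a) (ha' : 0 < a') (hc : Finset.univ.gcd c = 1)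
    (hc' : Finset.univ.gcd c' = 1) (h : c ᵥ* B = Pi.single j a)
    (h' : c' ᵥ* B = Pi.single j a') : c = c' := by
  refine Int.eq_of_smul_eq_smul_of_gcd_eq_one ha' ha hc hc' (sub_eq_zero.1 ?_)
  by_contra hne
  refine hB (exists_vecMul_eq_zero_iff.1 ⟨_, hne, ?_⟩)
  rw [sub_vecMul, smul_vecMul, smul_vecMul, h, h', ← Pi.single_smul, ← Pi.single_smul,
    smul_eq_mul, smul_eq_mul, mul_comm, sub_self]

end Matrix

theorem stmt1 {n : ℕ} (B : Matrix (Fin n) (Fin n) ℤ) (hB : WeaklyNonsingular B) :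
    ∃! C : Matrix (Fin n) (Fin n) ℤ,
      WeaklyNonsingular C ∧
        ∃ m : Fin n → ℤ, (∀ i, 0 < m i) ∧ Cᵀ * B = Matrix.diagonal m := by
  have hdet : B.det ≠ 0 := det_ne_zero_of_rank_eq_card (by rw [hB.1, Fintype.card_fin])
  choose c hc a ha hcB using exists_gcd_eq_one_vecMul_eq_single hdet
  have hC : (of c)ᵀᵀ * B = diagonal a := transpose_mul_eq_diagonal_iff.2 hcB
  have hCdet : (of c)ᵀ.det ≠ 0 := by
    refine left_ne_zero_of_mul (a := (of c)ᵀ.det) (b := B.det) ?_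
    rw [← det_transpose (of c)ᵀ, ← det_mul, hC, det_diagonal]
    exact Finset.prod_ne_zero_iff.2 fun j _ => (ha j).ne'
  refine ⟨(of c)ᵀ, ⟨⟨by rw [rank_of_det_ne_zero hCdet, Fintype.card_fin], hc⟩, a, ha, hC⟩, ?_⟩
  rintro C' ⟨⟨-, hC'⟩, a', ha', hC'B⟩
  ext i j
  exact congrFun (eq_of_vecMul_eq_single_of_gcd_eq_one hdet (ha' j) (ha j) (hC' j) (hc j)
    (transpose_mul_eq_diagonal_iff.1 hC'B j) (hcB j)) i
end

section
/- Let B ∈ 𝒩𝒮_n and let C ∈ 𝒩𝒮_n satisfy CᵀB = diag(m(1),…,m(n)) with all m(i) > 0. Then the exponent of the finite abelian group J(B) = ℤ^{1×n}/r(B), the exponent of J(C) = ℤ^{1×n}/r(C), and lcm{m(1),…,m(n)} are all equal. -/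
/-!
If `Cᵀ B = diag(m)`, then `diag(L / m i) Cᵀ B = L • 1` for any common multiple `L` of the `m i`,
so `L` kills `ℤⁿ / r(B)`. Conversely, the `i`-th column `c` of `C` satisfies `c B = m i • eᵢ`;
if `k • eᵢ = v B` then `(m i • v - k • c) B = 0`, and since `B` is nonsingular `m i • v = k • c`.
Hence `m i` divides `k` times every entry of the unimodular column `c`, i.e. `m i ∣ k`.
The hypothesis is symmetric in `B` and `C` after transposing, which gives the same exponent for `C`.
-/

open Matrix

/-- The row space `r(A)` of a matrix: the subgroup (submodule) of `ℤ^{1×n}`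
consisting of all `v * A`. -/
def rowSpace {m n : ℕ} (A : Matrix (Fin m) (Fin n) ℤ) : Submodule ℤ (Fin n → ℤ) :=
  LinearMap.range A.vecMulLinear

variable {n : ℕ}

theorem exponent_quotient_rowSpace_dvd_of_mul_eq_diagonal {B C : Matrix (Fin n) (Fin n) ℤ}
    {m : Fin n → ℤ} (h : Cᵀ * B = diagonal m) {L : ℕ} (hL : ∀ i, m i ∣ L) :
    AddMonoid.exponent ((Fin n → ℤ) ⧸ rowSpace B) ∣ L := by
  refine AddMonoid.exponent_dvd_of_forall_nsmul_eq_zero fun x => ?_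
  obtain ⟨v, rfl⟩ := Submodule.Quotient.mk_surjective _ x
  rw [← Submodule.Quotient.mk_smul, Submodule.Quotient.mk_eq_zero]
  refine ⟨v ᵥ* (diagonal (fun i => (L : ℤ) / m i) * Cᵀ), ?_⟩
  have hdiag : (fun i => (L : ℤ) / m i * m i) = fun _ => (L : ℤ) :=
    funext fun i => Int.ediv_mul_cancel (hL i)
  change (v ᵥ* (diagonal (fun i => (L : ℤ) / m i) * Cᵀ)) ᵥ* B = L • v
  rw [vecMul_vecMul, Matrix.mul_assoc, h, diagonal_mul_diagonal, hdiag, ← natCast_zsmul]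
  ext k
  simp [vecMul_diagonal, mul_comm]

theorem dvd_of_smul_single_mem_rowSpace {B C : Matrix (Fin n) (Fin n) ℤ} {m : Fin n → ℤ}
    (hm : ∀ i, m i ≠ 0) (h : Cᵀ * B = diagonal m) {i : Fin n}
    (hCi : Finset.univ.gcd (fun j => C j i) = 1) {k : ℤ}
    (hk : k • Pi.single i 1 ∈ rowSpace B) : m i ∣ k := by
  obtain ⟨v, hv⟩ := hk
  change v ᵥ* B = k • Pi.single i 1 at hv
  have hdet : B.det ≠ 0 := by
    have hprod := congrArg det h
    rw [det_mul, det_diagonal] at hprod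
    exact right_ne_zero_of_mul (hprod ▸ Finset.prod_ne_zero_iff.mpr fun j _ => hm j)
  have hcol : (fun j => C j i) ᵥ* B = m i • Pi.single i 1 := by
    have hrow : (fun j => C j i) = Pi.single i 1 ᵥ* Cᵀ := by rw [single_one_vecMul]; rfl
    ext l
    rw [hrow, vecMul_vecMul, h, single_one_vecMul]
    simp [diagonal_apply, Pi.single_apply, eq_comm]
  have hker : (m i • v - k • (fun j => C j i)) ᵥ* B = 0 := by
    rw [sub_vecMul, smul_vecMul, smul_vecMul, hv, hcol, smul_smul, smul_smul, mul_comm, sub_self]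
  have hmul : m i • v = k • (fun j => C j i) := by
    by_contra hne
    exact hdet (exists_vecMul_eq_zero_iff.mp ⟨_, sub_ne_zero.mpr hne, hker⟩)
  have hdvd : m i ∣ Finset.univ.gcd (fun j => k * C j i) :=
    Finset.dvd_gcd_iff.mpr fun j _ => ⟨v j, by simpa [eq_comm] using congrFun hmul j⟩
  rwa [Finset.gcd_mul_left, hCi, mul_one, ← Int.abs_eq_normalize, dvd_abs] at hdvd

theorem dvd_exponent_quotient_rowSpace {B C : Matrix (Fin n) (Fin n) ℤ} {m : Fin n → ℤ}
    (hm : ∀ i, m i ≠ 0) (h : Cᵀ * B = diagonal m) {i : Fin n}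
    (hCi : Finset.univ.gcd (fun j => C j i) = 1) :
    m i ∣ AddMonoid.exponent ((Fin n → ℤ) ⧸ rowSpace B) := by
  refine dvd_of_smul_single_mem_rowSpace hm h hCi ?_
  rw [← Submodule.Quotient.mk_eq_zero, natCast_zsmul, Submodule.Quotient.mk_smul]
  exact AddMonoid.exponent_nsmul_eq_zero _

theorem exponent_quotient_rowSpace_eq_lcm {B C : Matrix (Fin n) (Fin n) ℤ} {m : Fin n → ℤ}
    (hm : ∀ i, m i ≠ 0) (h : Cᵀ * B = diagonal m)
    (hC : ∀ j, Finset.univ.gcd (fun i => C i j) = 1) :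
    (AddMonoid.exponent ((Fin n → ℤ) ⧸ rowSpace B) : ℤ) = Finset.univ.lcm m := by
  have hle : AddMonoid.exponent ((Fin n → ℤ) ⧸ rowSpace B) ∣ (Finset.univ.lcm m).natAbs :=
    exponent_quotient_rowSpace_dvd_of_mul_eq_diagonal h fun i =>
      Int.dvd_natAbs.mpr (Finset.dvd_lcm (Finset.mem_univ i))
  have hge : Finset.univ.lcm m ∣ AddMonoid.exponent ((Fin n → ℤ) ⧸ rowSpace B) :=
    Finset.lcm_dvd fun i _ => dvd_exponent_quotient_rowSpace hm h (hC i)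
  have hlcm : 0 ≤ Finset.univ.lcm m :=
    (Int.nonneg_iff_normalize_eq_self _).mp Finset.normalize_lcm
  exact Int.dvd_antisymm (Int.natCast_nonneg _) hlcm (Int.natCast_dvd.mpr hle) hge

theorem stmt2 {n : ℕ} (B C : Matrix (Fin n) (Fin n) ℤ)
    (hB : WeaklyNonsingular B) (hC : WeaklyNonsingular C)
    (m : Fin n → ℤ) (hm : ∀ i, 0 < m i)
    (h : Cᵀ * B = Matrix.diagonal m) :
    AddMonoid.exponent ((Fin n → ℤ) ⧸ rowSpace B)
        = AddMonoid.exponent ((Fin n → ℤ) ⧸ rowSpace C)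
      ∧ (AddMonoid.exponent ((Fin n → ℤ) ⧸ rowSpace B) : ℤ) = Finset.univ.lcm m := by
  have hm₀ : ∀ i, m i ≠ 0 := fun i => (hm i).ne'
  have h' : Bᵀ * C = diagonal m := by
    rw [← transpose_transpose (Bᵀ * C), transpose_mul, transpose_transpose, h, diagonal_transpose]
  have hBexp := exponent_quotient_rowSpace_eq_lcm hm₀ h hC.2
  have hCexp := exponent_quotient_rowSpace_eq_lcm hm₀ h' hB.2
  exact ⟨by exact_mod_cast hBexp.trans hCexp.symm, hBexp⟩
end

section
/- Let 0 → A →f B →g C → 0 be a short exact sequence of finite abelian groups (f injective, g surjective, and the range of f equals the kernel of g). If (a) Exp B = Exp A and A is cyclic, or (b) Exp B = Exp C and C is cyclic, or (c) Exp B is square-free, then the sequence splits: there exists a group homomorphism s : C → B with g ∘ s = id_C. -/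
/-!
With `n = Exp B`, the groups in play are `ZMod n`-modules and additive maps between them are
`ZMod n`-linear. In case (b), `C ≅ ZMod n` is free, hence projective, so `id_C` lifts along `g`.
In case (c), `ZMod n` is reduced and artinian, hence semisimple, so every module over it is
projective. In case (a), `A ≅ ZMod n` is an injective `ZMod n`-module, so `id_A` extends along `f`
to a retraction, and a retraction of `f` yields a section of `g`.
-/

theorem ZMod.baer_self (n : ℕ) [NeZero n] : Module.Baer (ZMod n) (ZMod n) := by
  -- The preimage of `I` in `ℤ` is `mℤ` with `m ∣ n = m k`; then `k • g m = 0` forces `m ∣ g m`,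
  -- and `g` is multiplication by `g m / m`.
  intro I g
  set J := I.comap (Int.castRingHom (ZMod n))
  set m := Submodule.IsPrincipal.generator J
  have mem_I (z : ℤ) : (z : ZMod n) ∈ I ↔ m ∣ z := Submodule.IsPrincipal.mem_iff_generator_dvd J
  have hm : (m : ZMod n) ∈ I := (mem_I m).2 dvd_rfl
  obtain ⟨k, hk⟩ : m ∣ n := (mem_I n).1 (by simp)
  have hk0 : k ≠ 0 := by rintro rfl; simp [NeZero.ne n] at hk
  have hky : (k : ZMod n) * g ⟨m, hm⟩ = 0 := by
    have : (k : ZMod n) • (⟨m, hm⟩ : I) = 0 := by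
      ext
      rw [Submodule.coe_smul, smul_eq_mul, ← Int.cast_mul, mul_comm, ← hk]
      simp
    rw [← smul_eq_mul, ← map_smul, this, map_zero]
  obtain ⟨t, ht⟩ : m ∣ ((g ⟨m, hm⟩).cast : ℤ) := by
    rw [← ZMod.intCast_zmod_cast (g _), ← Int.cast_mul, ZMod.intCast_zmod_eq_zero_iff_dvd, hk,
      mul_comm m] at hky
    exact Int.dvd_of_mul_dvd_mul_left hk0 hky
  refine ⟨LinearMap.toSpanSingleton (ZMod n) (ZMod n) t, fun x hx => ?_⟩
  obtain ⟨j, hj⟩ := (mem_I x.cast).1 (by rwa [ZMod.intCast_zmod_cast])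
  have hx' : (⟨x, hx⟩ : I) = (j : ZMod n) • ⟨m, hm⟩ := by
    ext
    rw [Submodule.coe_smul, smul_eq_mul, ← Int.cast_mul, mul_comm, ← hj, ZMod.intCast_zmod_cast]
  rw [hx', map_smul, LinearMap.toSpanSingleton_apply, smul_eq_mul, smul_eq_mul,
    ← ZMod.intCast_zmod_cast (g _), ht, ← ZMod.intCast_zmod_cast x, hj]
  push_cast; ring

theorem AddMonoidHom.exists_section_of_exists_retraction {A B C : Type*} [AddCommGroup A]
    [AddCommGroup B] [AddCommGroup C] (f : A →+ B) (g : B →+ C) (hf : Function.Injective f)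
    (hg : Function.Surjective g) (hfg : f.range = g.ker)
    (hr : ∃ r : B →+ A, r.comp f = AddMonoidHom.id A) :
    ∃ s : C →+ B, g.comp s = AddMonoidHom.id C := by
  have hexact : Function.Exact f.toIntLinearMap g.toIntLinearMap := fun b => by
    simp [← AddMonoidHom.mem_ker, ← hfg]
  obtain ⟨r, hr⟩ := hr
  have hr' : r.toIntLinearMap ∘ₗ f.toIntLinearMap = LinearMap.id :=
    congr(AddMonoidHom.toIntLinearMap $hr)
  have hsplit : (∃ l, l ∘ₗ f.toIntLinearMap = LinearMap.id) →
      ∃ l, g.toIntLinearMap ∘ₗ l = LinearMap.id :=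
    ((hexact.split_tfae hf hg).out 1 0).1
  obtain ⟨s, hs⟩ := hsplit ⟨_, hr'⟩
  exact ⟨s.toAddMonoidHom, congr(LinearMap.toAddMonoidHom $hs)⟩

section ZModModule

variable {A B C : Type*} [AddCommGroup A] [AddCommGroup B] [AddCommGroup C] (n : ℕ)
  [Module (ZMod n) A] [Module (ZMod n) B] [Module (ZMod n) C]

theorem AddMonoidHom.exists_retraction_of_baer (hA : Module.Baer (ZMod n) A) (f : A →+ B)
    (hf : Function.Injective f) : ∃ r : B →+ A, r.comp f = AddMonoidHom.id A := by
  obtain ⟨r, hr⟩ := hA.extension_property (f.toZModLinearMap n) hf LinearMap.id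
  exact ⟨r.toAddMonoidHom, congr(LinearMap.toAddMonoidHom $hr)⟩

theorem AddMonoidHom.exists_section_of_projective [Module.Projective (ZMod n) C] (g : B →+ C)
    (hg : Function.Surjective g) : ∃ s : C →+ B, g.comp s = AddMonoidHom.id C := by
  obtain ⟨s, hs⟩ := Module.projective_lifting_property (g.toZModLinearMap n) LinearMap.id hg
  exact ⟨s.toAddMonoidHom, congr(LinearMap.toAddMonoidHom $hs)⟩

end ZModModule

section Exponent

variable {A B C : Type*} [AddCommGroup A] [AddCommGroup B] [AddCommGroup C]

theorem AddMonoidHom.exists_retraction_of_isAddCyclic [Finite A] (hA : IsAddCyclic A)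
    (f : A →+ B) (hf : Function.Injective f)
    (hexp : AddMonoid.exponent B = AddMonoid.exponent A) :
    ∃ r : B →+ A, r.comp f = AddMonoidHom.id A := by
  set n := Nat.card A
  have : NeZero n := ⟨Nat.card_pos.ne'⟩
  have hexpA : AddMonoid.exponent A = n := IsAddCyclic.exponent_eq_card
  -- Opaque instances: the `match` inside `AddCommGroup.zmodModule` can stall instance search.
  obtain ⟨_⟩ : Nonempty (Module (ZMod n) A) := ⟨AddCommGroup.zmodModule fun a => by
    rw [← hexpA]; exact AddMonoid.exponent_nsmul_eq_zero a⟩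
  obtain ⟨_⟩ : Nonempty (Module (ZMod n) B) := ⟨AddCommGroup.zmodModule fun b => by
    rw [← hexpA, ← hexp]; exact AddMonoid.exponent_nsmul_eq_zero b⟩
  let e := zmodAddCyclicAddEquiv hA
  exact f.exists_retraction_of_baer n
    ((ZMod.baer_self n).of_equiv (e.toLinearEquiv (ZMod.map_smul e))) hf

theorem AddMonoidHom.exists_section_of_isAddCyclic [Finite C] (hC : IsAddCyclic C)
    (g : B →+ C) (hg : Function.Surjective g)
    (hexp : AddMonoid.exponent B = AddMonoid.exponent C) :
    ∃ s : C →+ B, g.comp s = AddMonoidHom.id C := by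
  set n := Nat.card C
  have hexpC : AddMonoid.exponent C = n := IsAddCyclic.exponent_eq_card
  obtain ⟨_⟩ : Nonempty (Module (ZMod n) B) := ⟨AddCommGroup.zmodModule fun b => by
    rw [← hexpC, ← hexp]; exact AddMonoid.exponent_nsmul_eq_zero b⟩
  obtain ⟨_⟩ : Nonempty (Module (ZMod n) C) := ⟨AddCommGroup.zmodModule fun c => by
    rw [← hexpC]; exact AddMonoid.exponent_nsmul_eq_zero c⟩
  let e := zmodAddCyclicAddEquiv hC
  have : Module.Projective (ZMod n) C := .of_equiv' (e.toLinearEquiv (ZMod.map_smul e))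
  exact g.exists_section_of_projective n hg

theorem AddMonoidHom.exists_section_of_squarefree_exponent (g : B →+ C)
    (hg : Function.Surjective g) (hsq : Squarefree (AddMonoid.exponent B)) :
    ∃ s : C →+ B, g.comp s = AddMonoidHom.id C := by
  set n := AddMonoid.exponent B
  have : NeZero n := ⟨hsq.ne_zero⟩
  have : IsReduced (ZMod n) := isReduced_zmod.2 (Or.inl hsq)
  have : IsSemisimpleRing (ZMod n) := IsArtinianRing.isSemisimpleRing_of_isReduced _
  obtain ⟨_⟩ : Nonempty (Module (ZMod n) B) :=
    ⟨AddCommGroup.zmodModule AddMonoid.exponent_nsmul_eq_zero⟩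
  obtain ⟨_⟩ : Nonempty (Module (ZMod n) C) := ⟨AddCommGroup.zmodModule fun c => by
    obtain ⟨b, rfl⟩ := hg c
    rw [← map_nsmul, AddMonoid.exponent_nsmul_eq_zero, map_zero]⟩
  have : Module.Projective (ZMod n) C := Module.projective_of_isSemisimpleRing _ _
  exact g.exists_section_of_projective n hg

end Exponent

theorem stmt3_general {A B C : Type} [AddCommGroup A] [AddCommGroup B] [AddCommGroup C]
    [Finite A] [Finite C]
    (f : A →+ B) (g : B →+ C)
    (hf : Function.Injective f) (hg : Function.Surjective g)
    (hfg : f.range = g.ker)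
    (hcase :
      (AddMonoid.exponent B = AddMonoid.exponent A ∧ IsAddCyclic A) ∨
      (AddMonoid.exponent B = AddMonoid.exponent C ∧ IsAddCyclic C) ∨
      Squarefree (AddMonoid.exponent B)) :
    ∃ s : C →+ B, g.comp s = AddMonoidHom.id C := by
  rcases hcase with ⟨hexp, hA⟩ | ⟨hexp, hC⟩ | hsq
  · exact f.exists_section_of_exists_retraction g hf hg hfg
      (f.exists_retraction_of_isAddCyclic hA hf hexp)
  · exact g.exists_section_of_isAddCyclic hC hg hexp
  · exact g.exists_section_of_squarefree_exponent hg hsq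

theorem stmt3 {A B C : Type} [AddCommGroup A] [AddCommGroup B] [AddCommGroup C]
    [Finite A] [Finite B] [Finite C]
    (f : A →+ B) (g : B →+ C)
    (hf : Function.Injective f) (hg : Function.Surjective g)
    (hfg : f.range = g.ker)
    (hcase :
      (AddMonoid.exponent B = AddMonoid.exponent A ∧ IsAddCyclic A) ∨
      (AddMonoid.exponent B = AddMonoid.exponent C ∧ IsAddCyclic C) ∨
      Squarefree (AddMonoid.exponent B)) :
    ∃ s : C →+ B, g.comp s = AddMonoidHom.id C :=
  stmt3_general f g hf hg hfg hcase
end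

section
/- Let H be a subgroup of ℤ^n such that ℤ^n/H is finite, with invariant factors f_1, f_2, …, f_n: that is, each f_i ≥ 1, f_i divides f_{i+1} for all i < n, and ℤ^n/H ≅ ⊕_{i=1}^{n} ℤ/f_iℤ. If x ∈ ℤ^n is such that x + H has additive order f_n in ℤ^n/H, then ℤ^n/(H + ℤx) ≅ ⊕_{i=1}^{n-1} ℤ/f_iℤ. -/
/-!
Transported along `ℤⁿ ⧸ H ≃+ G := ∏ ZMod fᵢ`, the class of `x` becomes `g` of order `F = fₙ`, the exponent
of `G`. Pushing the coordinates of `g` into `ZMod F` by the injections `ZMod fᵢ → ZMod F`, the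
order condition says that they generate the unit ideal; since `ZMod F` has stable range one, some
combination of them with last coefficient `1` is a unit. This gives `ψ : G →+ ZMod F` taking unit
values at both `g` and the last basis vector `e`, so `ker ψ` is a complement of both `⟨g⟩` and
`⟨e⟩`, and `G ⧸ ⟨g⟩ ≃+ ker ψ ≃+ G ⧸ ⟨e⟩ ≃+ ∏_{i<n} ZMod fᵢ`.
-/

open AddSubgroup QuotientAddGroup

namespace ZMod

def scaleHom {a b : ℕ} (h : a ∣ b) : ZMod a →+ ZMod b :=
  lift a ⟨zmultiplesHom _ ((b / a : ℕ) : ZMod b), by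
    rw [zmultiplesHom_apply, natCast_zsmul, nsmul_eq_mul, ← Nat.cast_mul,
      Nat.mul_div_cancel' h, natCast_self]⟩

theorem scaleHom_intCast {a b : ℕ} (h : a ∣ b) (k : ℤ) :
    scaleHom h k = k * ((b / a : ℕ) : ZMod b) := by
  simp [scaleHom, lift_coe]

variable {N : ℕ} [NeZero N]

theorem scaleHom_one_self : scaleHom (dvd_refl N) 1 = 1 := by
  simpa [Nat.div_self (Nat.pos_of_neZero N)] using scaleHom_intCast (dvd_refl N) 1

theorem scaleHom_injective {a : ℕ} (h : a ∣ N) : Function.Injective (scaleHom h) := by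
  rw [injective_iff_map_eq_zero]
  intro y hy
  obtain ⟨k, rfl⟩ := intCast_surjective y
  obtain ⟨e, rfl⟩ := h
  have he : e ≠ 0 := by rintro rfl; exact NeZero.ne (a * 0) (mul_zero a)
  have ha : a ≠ 0 := by rintro rfl; exact NeZero.ne (0 * e) (zero_mul e)
  rw [scaleHom_intCast, Nat.mul_div_cancel_left e (Nat.pos_of_ne_zero ha), ← Int.cast_natCast,
    ← Int.cast_mul, intCast_zmod_eq_zero_iff_dvd, Nat.cast_mul] at hy
  rw [intCast_zmod_eq_zero_iff_dvd]
  exact Int.dvd_of_mul_dvd_mul_right (by exact_mod_cast he) hy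

theorem exists_isUnit_add_mul_of_isCoprime {a b : ZMod N} (h : IsCoprime a b) :
    ∃ t, IsUnit (a + t * b) := by
  obtain ⟨d, hdN, _, ⟨v, rfl⟩, rfl⟩ := eq_unit_mul_divisor b
  have : NeZero d := ⟨fun hd => NeZero.ne N (Nat.eq_zero_of_zero_dvd (hd ▸ hdN))⟩
  have ha : IsUnit (castHom hdN (ZMod d) a) := by
    have := h.map (castHom hdN (ZMod d))
    rwa [map_mul, map_natCast, natCast_self, mul_zero, isCoprime_zero_right] at this
  -- lift the unit `a mod d` to a unit `u` of `ZMod N`; then `u - a` is a multiple of `d`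
  obtain ⟨u, hu⟩ := unitsMap_surjective hdN ha.unit
  have hud : castHom hdN (ZMod d) ((u : ZMod N) - a) = 0 := by
    rw [map_sub, sub_eq_zero, ← ha.unit_spec, ← hu]
    rfl
  obtain ⟨q, hq⟩ : d ∣ ((u : ZMod N) - a).val := by
    rwa [← natCast_zmod_val ((u : ZMod N) - a), map_natCast, natCast_eq_zero_iff] at hud
  have hsub : (u : ZMod N) - a = d * q := by
    rw [← natCast_zmod_val ((u : ZMod N) - a), hq, Nat.cast_mul]
  refine ⟨q * ↑v⁻¹, ?_⟩
  have : a + q * ↑v⁻¹ * (v * d) = u := by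
    linear_combination (-1 : ZMod N) * hsub + (q * d : ZMod N) * v.inv_mul
  exact this ▸ u.isUnit

theorem exists_isUnit_sum_mul {ι : Type*} [Fintype ι] [DecidableEq ι] {v c : ι → ZMod N}
    (hc : ∑ j, c j * v j = 1) (k : ι) : ∃ t : ι → ZMod N, t k = 1 ∧ IsUnit (∑ j, t j * v j) := by
  have hsplit (t : ι → ZMod N) :
      ∑ j, t j * v j = t k * v k + ∑ j ∈ Finset.univ.erase k, t j * v j :=
    (Finset.add_sum_erase _ (fun j => t j * v j) (Finset.mem_univ k)).symm
  obtain ⟨s, hs⟩ := exists_isUnit_add_mul_of_isCoprime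
    (⟨c k, 1, by rw [one_mul, ← hsplit, hc]⟩ :
      IsCoprime (v k) (∑ j ∈ Finset.univ.erase k, c j * v j))
  refine ⟨Function.update (s • c) k 1, Function.update_self .., ?_⟩
  rw [hsplit, Function.update_self, one_mul]
  rw [Finset.mul_sum] at hs
  convert hs using 3 with j hj
  rw [Function.update_of_ne (Finset.ne_of_mem_erase hj), Pi.smul_apply, smul_eq_mul, mul_assoc]

theorem exists_sum_mul_eq_one_of_addOrderOf_eq {ι : Type*} [Fintype ι] {v : ι → ZMod N}
    (hv : addOrderOf v = N) : ∃ c : ι → ZMod N, ∑ j, c j * v j = 1 := by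
  have : IsPrincipalIdealRing (ZMod N) := .of_surjective (Int.castRingHom _) intCast_surjective
  obtain ⟨b, hb⟩ := Submodule.IsPrincipal.principal (Ideal.span (Set.range v))
  obtain ⟨d, ⟨e, hde⟩, u, hu, rfl⟩ := eq_unit_mul_divisor b
  -- `e = N / d` annihilates the generator `u * d`, hence all of `v`
  have hkill : e • v = 0 := by
    funext j
    have hj : v j ∈ Ideal.span (Set.range v) := Ideal.subset_span ⟨j, rfl⟩
    rw [hb, Ideal.submodule_span_eq] at hj
    obtain ⟨r, hr⟩ := Ideal.mem_span_singleton'.mp hj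
    rw [Pi.smul_apply, Pi.zero_apply, ← hr, nsmul_eq_mul]
    calc (e : ZMod N) * (r * (u * d)) = r * u * ((d * e : ℕ) : ZMod N) := by push_cast; ring
      _ = 0 := by rw [← hde, natCast_self, mul_zero]
  have he : e = N :=
    Nat.dvd_antisymm (Dvd.intro_left d hde.symm) (hv ▸ addOrderOf_dvd_of_nsmul_eq_zero hkill)
  have hd : d = 1 := by
    rwa [he, eq_comm, Nat.mul_eq_right (NeZero.ne N)] at hde
  have htop : Ideal.span (Set.range v) = ⊤ := by
    rw [hb, hd, Nat.cast_one, mul_one, Ideal.submodule_span_eq, Ideal.span_singleton_eq_top]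
    exact hu
  exact Ideal.mem_span_range_iff_exists_fun.mp (htop ▸ Submodule.mem_top)

end ZMod

theorem mk'_comp_subtype_ker_bijective {A : Type*} [AddCommGroup A] {N : ℕ} (ψ : A →+ ZMod N)
    {g : A} (hg : N • g = 0) (hψg : IsUnit (ψ g)) :
    Function.Bijective ((mk' (zmultiples g)).comp ψ.ker.subtype) := by
  constructor
  · rw [injective_iff_map_eq_zero]
    rintro ⟨y, hy⟩ hyg
    obtain ⟨k, rfl⟩ := mem_zmultiples_iff.mp ((eq_zero_iff y).mp hyg)
    have hk : (k : ZMod N) = 0 := by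
      rwa [AddMonoidHom.mem_ker, map_zsmul, zsmul_eq_mul, hψg.mul_left_eq_zero] at hy
    obtain ⟨m, rfl⟩ := (ZMod.intCast_zmod_eq_zero_iff_dvd k N).mp hk
    refine Subtype.ext ?_
    change ((N : ℤ) * m) • g = 0
    rw [mul_comm, mul_zsmul, natCast_zsmul, hg, zsmul_zero]
  · intro q
    induction q using QuotientAddGroup.induction_on with | H y => ?_
    obtain ⟨u, hu⟩ := hψg
    obtain ⟨k, hk⟩ := ZMod.intCast_surjective (ψ y * ((u⁻¹ : (ZMod N)ˣ) : ZMod N))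
    refine ⟨⟨y - k • g, ?_⟩, ?_⟩
    · rw [AddMonoidHom.mem_ker, map_sub, map_zsmul, zsmul_eq_mul, hk, ← hu,
        Units.inv_mul_cancel_right, sub_self]
    · refine QuotientAddGroup.eq_iff_sub_mem.mpr ?_
      rw [AddSubgroup.coe_subtype, sub_sub_cancel_left]
      exact neg_mem (zsmul_mem (mem_zmultiples g) k)

theorem exists_addMonoidHom_isUnit_apply {ι : Type*} [Fintype ι] [DecidableEq ι] {f : ι → ℕ}
    (k : ι) [NeZero (f k)] (hf : ∀ i, f i ∣ f k) {g : ∀ i, ZMod (f i)}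
    (hg : addOrderOf g = f k) :
    ∃ ψ : (∀ i, ZMod (f i)) →+ ZMod (f k), IsUnit (ψ g) ∧ IsUnit (ψ (Pi.single k 1)) := by
  let E : (∀ i, ZMod (f i)) →+ (ι → ZMod (f k)) :=
    AddMonoidHom.pi fun i => (ZMod.scaleHom (hf i)).comp (Pi.evalAddMonoidHom _ i)
  have hE : Function.Injective E := fun y z hyz =>
    funext fun i => ZMod.scaleHom_injective (hf i) (congrFun hyz i)
  obtain ⟨c, hc⟩ := ZMod.exists_sum_mul_eq_one_of_addOrderOf_eq (v := E g)
    (by rw [addOrderOf_injective E hE, hg])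
  obtain ⟨t, htk, ht⟩ := ZMod.exists_isUnit_sum_mul hc k
  let ψ : (∀ i, ZMod (f i)) →+ ZMod (f k) := AddMonoidHom.mk' (fun y => ∑ j, t j * E y j)
    fun y z => by simp only [map_add, Pi.add_apply, mul_add, Finset.sum_add_distrib]
  refine ⟨ψ, ht, ?_⟩
  have hψk : ψ (Pi.single k 1) = t k * ZMod.scaleHom (hf k) 1 := by
    refine (Fintype.sum_eq_single k fun j hj => ?_).trans ?_
    · simp [E, Pi.single_eq_of_ne hj]
    · simp [E]
  rw [hψk, htk, one_mul, ZMod.scaleHom_one_self]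
  exact isUnit_one

section FinPi

variable {m : ℕ} (f : Fin (m + 1) → ℕ)

def initAddMonoidHom : (∀ i, ZMod (f i)) →+ ∀ i : Fin m, ZMod (f i.castSucc) :=
  AddMonoidHom.pi fun i => Pi.evalAddMonoidHom _ i.castSucc

theorem initAddMonoidHom_surjective : Function.Surjective (initAddMonoidHom f) :=
  fun z => ⟨Fin.snoc z 0, funext fun i => Fin.snoc_castSucc (α := fun i => ZMod (f i)) 0 z i⟩

theorem ker_initAddMonoidHom :
    (initAddMonoidHom f).ker = zmultiples (Pi.single (Fin.last m) 1) := by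
  apply le_antisymm
  · intro y hy
    obtain ⟨k, hk⟩ := ZMod.intCast_surjective (y (Fin.last m))
    refine mem_zmultiples_iff.mpr ⟨k, funext fun i => ?_⟩
    induction i using Fin.lastCases with
    | last => simp [hk]
    | cast i => simpa [initAddMonoidHom] using (congrFun hy i).symm
  · rw [zmultiples_le, AddMonoidHom.mem_ker]
    funext i
    exact Pi.single_eq_of_ne (Fin.castSucc_ne_last i) _

theorem nonempty_quotient_zmultiples_addEquiv [NeZero (f (Fin.last m))]
    (hf : ∀ i, f i ∣ f (Fin.last m)) {g : ∀ i, ZMod (f i)} (hg : addOrderOf g = f (Fin.last m)) :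
    Nonempty ((∀ i, ZMod (f i)) ⧸ zmultiples g ≃+ ∀ i : Fin m, ZMod (f i.castSucc)) := by
  obtain ⟨ψ, hψg, hψe⟩ := exists_addMonoidHom_isUnit_apply (Fin.last m) hf hg
  have hNg : f (Fin.last m) • g = 0 := hg ▸ addOrderOf_nsmul_eq_zero g
  have hNe : f (Fin.last m) • (Pi.single (Fin.last m) 1 : ∀ i, ZMod (f i)) = 0 := by
    rw [← Pi.single_smul, nsmul_eq_mul, mul_one, ZMod.natCast_self, Pi.single_zero]
  exact ⟨(AddEquiv.ofBijective _ (mk'_comp_subtype_ker_bijective ψ hNg hψg)).symm.trans <|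
    (AddEquiv.ofBijective _ (mk'_comp_subtype_ker_bijective ψ hNe hψe)).trans <|
    (quotientAddEquivOfEq (ker_initAddMonoidHom f).symm).trans <|
    quotientKerEquivOfSurjective _ (initAddMonoidHom_surjective f)⟩

end FinPi

def quotientSupZMultiplesEquiv {A B : Type*} [AddCommGroup A] [AddCommGroup B]
    (H : AddSubgroup A) (x : A) (φ : A ⧸ H ≃+ B) :
    A ⧸ (H ⊔ zmultiples x) ≃+ B ⧸ zmultiples (φ x) :=
  (quotientQuotientEquivQuotient H _ le_sup_left).symm.trans <|
    (quotientAddEquivOfEq (by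
      rw [AddSubgroup.map_sup, AddMonoidHom.map_zmultiples, map_mk'_self, bot_sup_eq]; rfl)).trans <|
    QuotientAddGroup.congr _ _ φ (AddMonoidHom.map_zmultiples _ _)

theorem stmt4 {n : ℕ} (hn : 0 < n) (H : AddSubgroup (Fin n → ℤ))
    (f : Fin n → ℕ) (hf1 : ∀ i, 1 ≤ f i)
    (hdiv : ∀ i j : Fin n, i ≤ j → f i ∣ f j)
    (hiso : Nonempty (((Fin n → ℤ) ⧸ H) ≃+ ((i : Fin n) → ZMod (f i))))
    (x : Fin n → ℤ)
    (hx : addOrderOf (QuotientAddGroup.mk x : (Fin n → ℤ) ⧸ H) = f ⟨n - 1, by omega⟩) :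
    Nonempty (((Fin n → ℤ) ⧸ (H ⊔ AddSubgroup.zmultiples x))
      ≃+ ((i : Fin (n - 1)) → ZMod (f (Fin.castLE (Nat.sub_le n 1) i)))) := by
  obtain ⟨φ⟩ := hiso
  obtain ⟨m, rfl⟩ : ∃ m, n = m + 1 := ⟨n - 1, by omega⟩
  have : NeZero (f (Fin.last m)) := ⟨Nat.one_le_iff_ne_zero.mp (hf1 _)⟩
  have hg : addOrderOf (φ x) = f (Fin.last m) :=
    (addOrderOf_injective φ.toAddMonoidHom φ.injective _).trans hx
  obtain ⟨e⟩ := nonempty_quotient_zmultiples_addEquiv f (fun i => hdiv i _ (Fin.le_last i)) hg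
  exact ⟨(quotientSupZMultiplesEquiv H x φ).trans e⟩
end

section
/- Let A be an r×n integer matrix of rank r and let B be an n×r integer matrix. Then the sequence 0 → ℤ^{1×r}/ℤ^{1×n}B → ℤ^{1×n}/ℤ^{1×n}BA → ℤ^{1×n}/ℤ^{1×r}A → 0 is exact, where the left map is induced by v ↦ vA and the right map is induced by the identity v ↦ v: that is, the left map is a well-defined injective group homomorphism, the right map is a well-defined surjective group homomorphism, and the range of the left map equals the kernel of the right map. -/
/-!
Since `A` has rank `r`, the column space of `A` has full rank in `ℤ^r`, so every vector of `ℤ^r`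
has a nonzero multiple of the form `A w`; pairing with `v` shows that `vA = 0` forces `v = 0`.
Thus `v ↦ vA` is an injection `ℤ^r ↪ ℤ^n` carrying `ℤ^{1×n}B` onto `ℤ^{1×n}BA`, and the sequence
is the standard exact sequence `0 → M/P → N/f(P) → N/f(M) → 0` of an injective linear map `f`.
-/

open Matrix Module Submodule

theorem Submodule.exists_smul_mem_of_finrank_eq {R M : Type*} [CommRing R] [IsDomain R]
    [AddCommGroup M] [Module R M] [Module.Finite R M] (N : Submodule R M)
    (h : finrank R N = finrank R M) (x : M) : ∃ a : R, a ≠ 0 ∧ a • x ∈ N := by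
  have hquot : finrank R (M ⧸ N) = 0 := by
    have := N.finrank_quotient_add_finrank
    omega
  obtain ⟨a, ha, hax⟩ := Module.finrank_eq_zero_iff.mp hquot (N.mkQ x)
  exact ⟨a, ha, (Quotient.mk_eq_zero N).mp (by rwa [← map_smul] at hax)⟩

theorem Matrix.vecMulLinear_injective_of_rank_eq {R m n : Type*} [CommRing R] [IsDomain R]
    [Fintype m] [Fintype n] (A : Matrix m n R) (hA : A.rank = Fintype.card m) :
    Function.Injective A.vecMulLinear := by
  classical
  rw [← LinearMap.ker_eq_bot, eq_bot_iff]
  intro v hv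
  replace hv : v ᵥ* A = 0 := hv
  have hfull : finrank R (LinearMap.range A.mulVecLin) = finrank R (m → R) := by
    rw [finrank_fintype_fun_eq_card]
    exact hA
  ext i
  obtain ⟨a, ha, w, hw⟩ := (LinearMap.range A.mulVecLin).exists_smul_mem_of_finrank_eq hfull
    (Pi.single i 1)
  have hav : a * v i = 0 :=
    calc a * v i = v ⬝ᵥ (a • Pi.single i 1) := by simp
      _ = (v ᵥ* A) ⬝ᵥ w := by rw [← hw, mulVecLin_apply, dotProduct_mulVec]
      _ = 0 := by rw [hv, zero_dotProduct]
  exact (mul_eq_zero.mp hav).resolve_left ha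

theorem Matrix.vecMulLinear_mul {R l m n : Type*} [CommSemiring R] [Fintype l] [Fintype m]
    (A : Matrix l m R) (B : Matrix m n R) :
    (A * B).vecMulLinear = B.vecMulLinear ∘ₗ A.vecMulLinear := by
  ext v : 1
  simp [vecMul_vecMul]

theorem rowSpace_mul {r n : ℕ} (B : Matrix (Fin n) (Fin r) ℤ) (A : Matrix (Fin r) (Fin n) ℤ) :
    rowSpace (B * A) = (rowSpace B).map A.vecMulLinear := by
  rw [rowSpace, rowSpace, Matrix.vecMulLinear_mul, LinearMap.range_comp]

section QuotientByImage

variable {R M N : Type*} [Ring R] [AddCommGroup M] [Module R M] [AddCommGroup N] [Module R N]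
  (P : Submodule R M) (f : M →ₗ[R] N)

theorem Submodule.mapQ_map_injective (hf : Function.Injective f) :
    Function.Injective (P.mapQ (P.map f) f (le_comap_map f P)) := by
  rw [← LinearMap.ker_eq_bot, ker_mapQ, comap_map_eq_of_injective hf, mkQ_map_self]

theorem Submodule.range_mapQ_map_eq_ker_mapQ_id :
    LinearMap.range (P.mapQ (P.map f) f (le_comap_map f P)) =
      LinearMap.ker ((P.map f).mapQ (LinearMap.range f) LinearMap.id
        (by rw [comap_id]; exact LinearMap.map_le_range)) := by
  rw [range_mapQ, ker_mapQ, comap_id]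

end QuotientByImage

theorem stmt6 {r n : ℕ} (A : Matrix (Fin r) (Fin n) ℤ) (hA : A.rank = r)
    (B : Matrix (Fin n) (Fin r) ℤ) :
    ∃ (φ : ((Fin r → ℤ) ⧸ rowSpace B) →ₗ[ℤ] ((Fin n → ℤ) ⧸ rowSpace (B * A)))
      (ψ : ((Fin n → ℤ) ⧸ rowSpace (B * A)) →ₗ[ℤ] ((Fin n → ℤ) ⧸ rowSpace A)),
      (∀ v : Fin r → ℤ,
          φ (Submodule.Quotient.mk v) = Submodule.Quotient.mk (Matrix.vecMul v A)) ∧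
      (∀ v : Fin n → ℤ, ψ (Submodule.Quotient.mk v) = Submodule.Quotient.mk v) ∧
      Function.Injective φ ∧ Function.Surjective ψ ∧
      LinearMap.range φ = LinearMap.ker ψ := by
  have hinj : Function.Injective A.vecMulLinear :=
    A.vecMulLinear_injective_of_rank_eq (by rw [hA, Fintype.card_fin])
  rw [rowSpace_mul]
  refine ⟨_, _, fun _ => rfl, fun _ => rfl, (rowSpace B).mapQ_map_injective _ hinj,
    ?_, (rowSpace B).range_mapQ_map_eq_ker_mapQ_id _⟩
  rintro ⟨v⟩
  exact ⟨Submodule.Quotient.mk v, rfl⟩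
end

section
/- Let B ∈ 𝒩𝒮_n and let C ∈ 𝒩𝒮_n satisfy CᵀB = Δ, where Δ is an integer diagonal matrix with strictly positive diagonal entries. Then r(B) + r(C) = ℤ^{1×n} if and only if r(B) ∩ r(C) = r(Δ). -/
/-!
Since `Δ = CᵀB = BᵀC`, the lattice `r(Δ)` lies in `r(B) ∩ r(C)`, and comparing determinants gives
`[r(B) : r(Δ)] = |det C| = [ℤⁿ : r(C)]`. Factoring the left index through `r(B) ∩ r(C)` and the
right one through `r(B) + r(C)`, the second isomorphism theorem
`[r(B) : r(B) ∩ r(C)] = [r(B) + r(C) : r(C)]` leaves `[r(B) ∩ r(C) : r(Δ)] = [ℤⁿ : r(B) + r(C)]`,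
so one index is `1` exactly when the other is.
-/

open Matrix

theorem Matrix.vecMulLinear_injective_of_det_ne_zero {R ι : Type*} [CommRing R] [IsDomain R]
    [Fintype ι] [DecidableEq ι] {A : Matrix ι ι R} (hA : A.det ≠ 0) :
    Function.Injective A.vecMulLinear := by
  rw [← LinearMap.ker_eq_bot, LinearMap.ker_eq_bot']
  intro v hv
  by_contra hv0
  exact hA (exists_vecMul_eq_zero_iff.mp ⟨v, hv0, hv⟩)

theorem rowSpace_toAddSubgroup_index {n : ℕ} {A : Matrix (Fin n) (Fin n) ℤ} (hA : A.det ≠ 0) :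
    (rowSpace A).toAddSubgroup.index = A.det.natAbs := by
  let e := LinearEquiv.ofInjective A.vecMulLinear (vecMulLinear_injective_of_det_ne_zero hA)
  have := Submodule.natAbs_det_equiv (rowSpace A) e.toAddEquiv
  change (LinearMap.det A.vecMulLinear).natAbs = _ at this
  rw [← mulVecLin_transpose, ← toLin'_apply', LinearMap.det_toLin', det_transpose] at this
  rw [this]
  rfl

theorem rowSpace_mul_le {l m n : ℕ} (A : Matrix (Fin l) (Fin m) ℤ) (B : Matrix (Fin m) (Fin n) ℤ) :
    rowSpace (A * B) ≤ rowSpace B := by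
  rintro _ ⟨v, rfl⟩
  exact ⟨v ᵥ* A, vecMul_vecMul v A B⟩

theorem relIndex_rowSpace_mul {n : ℕ} {A B : Matrix (Fin n) (Fin n) ℤ} (hA : A.det ≠ 0)
    (hB : B.det ≠ 0) :
    (rowSpace (A * B)).toAddSubgroup.relIndex (rowSpace B).toAddSubgroup = A.det.natAbs := by
  have hAB : (A * B).det ≠ 0 := by rw [det_mul]; exact mul_ne_zero hA hB
  have := AddSubgroup.relIndex_mul_index
    ((Submodule.toAddSubgroup_le _ _).mpr (rowSpace_mul_le A B))
  rw [rowSpace_toAddSubgroup_index hB, rowSpace_toAddSubgroup_index hAB, det_mul,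
    Int.natAbs_mul] at this
  exact Nat.eq_of_mul_eq_mul_right (Int.natAbs_pos.mpr hB) this

theorem AddSubgroup.relIndex_inf_eq_index_sup {G : Type*} [AddCommGroup G]
    {D L₁ L₂ : AddSubgroup G} (hD : D ≤ L₁ ⊓ L₂) (h : D.relIndex L₁ = L₂.index)
    (hL₂ : L₂.index ≠ 0) :
    D.relIndex (L₁ ⊓ L₂) = (L₁ ⊔ L₂).index := by
  have hL₁ : D.relIndex (L₁ ⊓ L₂) * L₂.relIndex L₁ = D.relIndex L₁ := by
    rw [← inf_relIndex_left L₁ L₂]; exact relIndex_mul_relIndex _ _ _ hD inf_le_left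
  have hL₂' : L₂.relIndex L₁ * (L₁ ⊔ L₂).index = L₂.index := by
    rw [← relIndex_sup_right]; exact relIndex_mul_index le_sup_right
  have ht : L₂.relIndex L₁ ≠ 0 := left_ne_zero_of_mul (hL₂'.trans_ne hL₂)
  apply Nat.eq_of_mul_eq_mul_left (Nat.pos_of_ne_zero ht)
  rw [mul_comm, hL₁, hL₂', h]

theorem AddSubgroup.sup_eq_top_iff_inf_eq {G : Type*} [AddCommGroup G] {D L₁ L₂ : AddSubgroup G}
    (hD : D ≤ L₁ ⊓ L₂) (h : D.relIndex L₁ = L₂.index) (hL₂ : L₂.index ≠ 0) :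
    L₁ ⊔ L₂ = ⊤ ↔ L₁ ⊓ L₂ = D := by
  rw [← index_eq_one, ← relIndex_inf_eq_index_sup hD h hL₂, relIndex_eq_one, le_antisymm_iff,
    and_iff_left hD]

theorem stmt8_general {n : ℕ} (B C : Matrix (Fin n) (Fin n) ℤ)
    (m : Fin n → ℤ) (hm : ∀ i, 0 < m i)
    (h : Cᵀ * B = Matrix.diagonal m) :
    (rowSpace B ⊔ rowSpace C = ⊤)
      ↔ (rowSpace B ⊓ rowSpace C = rowSpace (Matrix.diagonal m)) := by
  have hΔ : (diagonal m).det ≠ 0 := by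
    rw [det_diagonal]; exact Finset.prod_ne_zero_iff.mpr fun i _ => (hm i).ne'
  have hdet : C.det * B.det = (diagonal m).det := by rw [← h, det_mul, det_transpose]
  have hB : B.det ≠ 0 := right_ne_zero_of_mul (hdet.trans_ne hΔ)
  have hC : C.det ≠ 0 := left_ne_zero_of_mul (hdet.trans_ne hΔ)
  have hsymm : Bᵀ * C = diagonal m := by
    rw [← diagonal_transpose, ← h, transpose_mul, transpose_transpose]
  have hΔB : rowSpace (diagonal m) ≤ rowSpace B := h ▸ rowSpace_mul_le Cᵀ B
  have hΔC : rowSpace (diagonal m) ≤ rowSpace C := hsymm ▸ rowSpace_mul_le Bᵀ C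
  have hrel : (rowSpace (diagonal m)).toAddSubgroup.relIndex (rowSpace B).toAddSubgroup
      = (rowSpace C).toAddSubgroup.index := by
    rw [← h, relIndex_rowSpace_mul (by rwa [det_transpose]) hB, det_transpose,
      rowSpace_toAddSubgroup_index hC]
  have key := AddSubgroup.sup_eq_top_iff_inf_eq (le_inf hΔB hΔC) hrel
    (by rw [rowSpace_toAddSubgroup_index hC]; exact Int.natAbs_ne_zero.mpr hC)
  rw [← Submodule.toAddSubgroup_inj, Submodule.sup_toAddSubgroup, Submodule.top_toAddSubgroup]
  exact key.trans (Submodule.toAddSubgroup_inj (rowSpace B ⊓ rowSpace C) _)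

theorem stmt8 {n : ℕ} (B C : Matrix (Fin n) (Fin n) ℤ)
    (hB : WeaklyNonsingular B) (hC : WeaklyNonsingular C)
    (m : Fin n → ℤ) (hm : ∀ i, 0 < m i)
    (h : Cᵀ * B = Matrix.diagonal m) :
    (rowSpace B ⊔ rowSpace C = ⊤)
      ↔ (rowSpace B ⊓ rowSpace C = rowSpace (Matrix.diagonal m)) :=
  stmt8_general B C m hm h
end

section
/- Let n ≥ 2 and d > 1 be integers, and let a = (a_1,…,a_{n-1}) ∈ ℤ^{n-1} satisfy 0 ≤ a_i < d for all i and gcd{d, a_1, …, a_{n-1}} = 1. Let B_a denote the n×n integer matrix with I_{n-1} in the upper left block, the column a in the upper right, zero row below the identity block, and d in the (n,n) entry. Let π be a permutation of {1,…,n} and let P be the n×n permutation matrix with P_{k,π(k)} = 1 and zeros elsewhere (so that column j of MP equals column π^{-1}(j) of M). Then there exist an integer matrix U with det U = ±1 and a' = (a'_1,…,a'_{n-1}) ∈ ℤ^{n-1} with 0 ≤ a'_i < d, gcd{d, a'_1, …, a'_{n-1}} = 1, and U·B_a = B_{a'}·P, if and only if either π(n) = n or gcd(a_{π(n)}, d)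 = 1. Moreover, when π(n) ≠ n and such U, a' exist, a' satisfies a'_{π^{-1}(n)}·a_{π(n)} ≡ 1 (mod d) and a'_t·a_{π(n)} ≡ −a_{π(t)} (mod d) for every t ∈ {1,…,n−1} with t ≠ π^{-1}(n). -/
/-- The block matrix `[[I_n, a], [0, d]]` of size `n+1`. -/
def Bcol {n : ℕ} (d : ℤ) (a : Fin n → ℤ) : Matrix (Fin (n + 1)) (Fin (n + 1)) ℤ :=
  Matrix.of fun i j =>
    if hj : j = Fin.last n then
      if hi : i = Fin.last n then d else a (i.castPred hi)
    else
      if i = j then 1 else 0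

/-- The permutation matrix `P` with `P (k, π k) = 1` and zeros elsewhere. -/
def permMat {n : ℕ} (π : Equiv.Perm (Fin n)) : Matrix (Fin n) (Fin n) ℤ :=
  Matrix.of fun i j => if π i = j then 1 else 0

/-! Since `det (Bcol d a) = d`, an integer matrix `C` factors as `U * Bcol d a` with `U` integral
exactly when every row of `C` pairs with `w = (-a, 1)` to a multiple of `d`, and comparing
determinants then gives `det U = sign π`. For `C = Bcol d a' * P` the condition says
`a'_t * c ≡ -v_t (mod d)` for all `t`, where `v = w ∘ π` and `c = v_n = w_{π(n)}`.
Since `w` has an entry `1`, this forces `c` to be a unit mod `d`, which is the stated criterion;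
conversely, if `c` is a unit, `a'_t := (-c⁻¹ v_t) mod d` works, and `gcd(d, a') = 1` follows from
`gcd(d, a) = 1` because the entries `v_t` are those of `w` except `w_{π(n)}`. -/

open Matrix Finset

section Bcol

variable {n : ℕ} (d : ℤ) (a : Fin n → ℤ)

@[simp]
lemma Bcol_apply_castSucc (i : Fin (n + 1)) (k : Fin n) :
    Bcol d a i k.castSucc = if i = k.castSucc then 1 else 0 := by
  simp [Bcol, (Fin.castSucc_lt_last k).ne]

@[simp]
lemma Bcol_castSucc_last (t : Fin n) : Bcol d a t.castSucc (Fin.last n) = a t := by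
  simp [Bcol, (Fin.castSucc_lt_last t).ne]

@[simp]
lemma Bcol_last_last : Bcol d a (Fin.last n) (Fin.last n) = d := by
  simp [Bcol]

lemma det_Bcol : (Bcol d a).det = d := by
  rw [det_of_isUpperTriangular, Fin.prod_univ_castSucc]
  · simp
  · intro i j hij
    induction j using Fin.lastCases with
    | last => exact absurd (Fin.le_last i) (not_le.2 hij)
    | cast k => simpa using hij.ne'

lemma Bcol_mulVec_castSucc (v : Fin (n + 1) → ℤ) (t : Fin n) :
    (Bcol d a *ᵥ v) t.castSucc = v t.castSucc + a t * v (Fin.last n) := by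
  simp [mulVec, dotProduct, Fin.sum_univ_castSucc]

lemma Bcol_mulVec_last (v : Fin (n + 1) → ℤ) :
    (Bcol d a *ᵥ v) (Fin.last n) = d * v (Fin.last n) := by
  simp [mulVec, dotProduct, Fin.sum_univ_castSucc, (Fin.castSucc_lt_last _).ne']

lemma mul_Bcol_apply_castSucc (M : Matrix (Fin (n + 1)) (Fin (n + 1)) ℤ) (i : Fin (n + 1))
    (k : Fin n) : (M * Bcol d a) i k.castSucc = M i k.castSucc := by
  simp [mul_apply]

lemma mul_Bcol_apply_last (M : Matrix (Fin (n + 1)) (Fin (n + 1)) ℤ) (i : Fin (n + 1)) :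
    (M * Bcol d a) i (Fin.last n) = ∑ k, M i k.castSucc * a k + M i (Fin.last n) * d := by
  simp [mul_apply, Fin.sum_univ_castSucc]

end Bcol

lemma permMat_eq_permMatrix {n : ℕ} (π : Equiv.Perm (Fin n)) :
    permMat π = π.permMatrix ℤ := by
  ext i j
  simp [permMat, Equiv.Perm.permMatrix, PEquiv.toMatrix_apply]

lemma permMat_mulVec {n : ℕ} (π : Equiv.Perm (Fin n)) (v : Fin n → ℤ) :
    permMat π *ᵥ v = v ∘ π := by
  ext i
  simp [permMat, mulVec, dotProduct]

section Transform

variable {n : ℕ} {d : ℤ} {a a' : Fin n → ℤ} {π : Equiv.Perm (Fin (n + 1))}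

lemma det_eq_sign_of_mul_Bcol_eq {U : Matrix (Fin (n + 1)) (Fin (n + 1)) ℤ} (hd : d ≠ 0)
    (hU : U * Bcol d a = Bcol d a' * permMat π) : U.det = Equiv.Perm.sign π := by
  have h := congrArg det hU
  rw [det_mul, det_mul, det_Bcol, det_Bcol, permMat_eq_permMatrix, det_permutation,
    mul_comm] at h
  exact mul_left_cancel₀ hd h

lemma Bcol_mulVec_snoc_neg_one :
    Bcol d a *ᵥ (Fin.snoc (-a) 1 : Fin (n + 1) → ℤ) = Pi.single (Fin.last n) d := by
  ext i
  induction i using Fin.lastCases with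
  | last => simp [Bcol_mulVec_last]
  | cast t => simp [Bcol_mulVec_castSucc, (Fin.castSucc_lt_last t).ne]

lemma exists_mul_Bcol_eq_iff (C : Matrix (Fin (n + 1)) (Fin (n + 1)) ℤ) :
    (∃ U, U * Bcol d a = C) ↔ ∀ i, d ∣ (C *ᵥ Fin.snoc (-a) 1) i := by
  constructor
  · rintro ⟨U, rfl⟩ i
    rw [← mulVec_mulVec, Bcol_mulVec_snoc_neg_one, mulVec_single]
    exact Dvd.intro_left _ rfl
  · intro h
    refine ⟨Matrix.of fun i =>
      Fin.snoc (fun k => C i k.castSucc) ((C *ᵥ Fin.snoc (-a) 1) i / d), ?_⟩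
    ext i j
    induction j using Fin.lastCases with
    | last =>
      rw [mul_Bcol_apply_last]
      simp only [of_apply, Fin.snoc_castSucc, Fin.snoc_last, Int.ediv_mul_cancel (h i)]
      simp [mulVec, dotProduct, Fin.sum_univ_castSucc]
    | cast k => simp [mul_Bcol_apply_castSucc]

lemma exists_mul_Bcol_eq_Bcol_mul_permMat_iff :
    (∃ U, U * Bcol d a = Bcol d a' * permMat π) ↔
      ∀ t : Fin n, d ∣ (Fin.snoc (-a) 1 : Fin (n + 1) → ℤ) (π t.castSucc)
        + a' t * (Fin.snoc (-a) 1 : Fin (n + 1) → ℤ) (π (Fin.last n)) := by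
  rw [exists_mul_Bcol_eq_iff, ← mulVec_mulVec, permMat_mulVec, Fin.forall_fin_succ']
  simp only [Bcol_mulVec_castSucc, Bcol_mulVec_last, Function.comp_apply]
  exact and_iff_left (dvd_mul_right _ _)

end Transform

lemma snoc_neg_one_eq_neg_snoc {n : ℕ} (a : Fin n → ℤ) (d : ℤ)
    {j : Fin (n + 1)} (hj : j ≠ Fin.last n) :
    (Fin.snoc (-a) 1 : Fin (n + 1) → ℤ) j = -(Fin.snoc a d : Fin (n + 1) → ℤ) j := by
  obtain ⟨t, rfl⟩ := Fin.exists_castSucc_eq.2 hj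
  simp

section Arithmetic

variable {n : ℕ} {d : ℤ}

lemma isCoprime_snoc_neg_one_iff (a : Fin n → ℤ) (j : Fin (n + 1)) :
    IsCoprime ((Fin.snoc (-a) 1 : Fin (n + 1) → ℤ) j) d ↔
      j = Fin.last n ∨ Int.gcd ((Fin.snoc a d : Fin (n + 1) → ℤ) j) d = 1 := by
  induction j using Fin.lastCases with
  | last => simp [isCoprime_one_left]
  | cast t =>
    simp [(Fin.castSucc_lt_last t).ne, IsCoprime.neg_left_iff, Int.isCoprime_iff_gcd_eq_one]

lemma isCoprime_last_of_dvd_add_mul {v : Fin (n + 1) → ℤ} {a' : Fin n → ℤ}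
    (h : ∀ t, d ∣ v t.castSucc + a' t * v (Fin.last n)) {j : Fin (n + 1)} (hj : v j = 1) :
    IsCoprime (v (Fin.last n)) d := by
  induction j using Fin.lastCases with
  | last => exact hj ▸ isCoprime_one_left
  | cast t =>
    obtain ⟨k, hk⟩ := h t
    exact ⟨-a' t, k, by linear_combination hj - hk⟩

lemma exists_bounded_dvd_add_mul {ι : Type*} (hd : 0 < d) (b : ι → ℤ) {c : ℤ}
    (hc : IsCoprime c d) :
    ∃ a' : ι → ℤ, (∀ t, 0 ≤ a' t ∧ a' t < d) ∧ ∀ t, d ∣ b t + a' t * c := by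
  obtain ⟨u, k, huk⟩ := hc
  refine ⟨fun t => -(u * b t) % d,
    fun t => ⟨Int.emod_nonneg _ hd.ne', Int.emod_lt_of_pos _ hd⟩,
    fun t => ⟨b t * k - -(u * b t) / d * c, ?_⟩⟩
  simp only [Int.emod_def]
  linear_combination (-b t) * huk

lemma gcd_eq_one_of_dvd_add_mul {ι : Type*} {s : Finset ι} {b a' : ι → ℤ} {c : ℤ}
    (h : ∀ t ∈ s, d ∣ b t + a' t * c) (hb : Int.gcd d (s.gcd b) = 1) :
    Int.gcd d (s.gcd a') = 1 := by
  refine Int.gcd_eq_one_iff.2 fun g hgd hga => Int.gcd_eq_one_iff.1 hb g hgd ?_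
  refine Finset.dvd_gcd fun t ht => ?_
  have hgat : g ∣ a' t * c := (hga.trans (Finset.gcd_dvd ht)).mul_right c
  exact (dvd_add_left hgat).1 (hgd.trans (h t ht))

lemma gcd_snoc_neg_one_perm_castSucc_eq_one {a : Fin n → ℤ}
    (hgcd : Int.gcd d (univ.gcd a) = 1) (π : Equiv.Perm (Fin (n + 1))) :
    Int.gcd d (univ.gcd fun t : Fin n => (Fin.snoc (-a) 1 : Fin (n + 1) → ℤ) (π t.castSucc))
      = 1 := by
  refine Int.gcd_eq_one_iff.2 fun g hgd hgv => ?_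
  have hv (t : Fin n) : g ∣ (Fin.snoc (-a) 1 : Fin (n + 1) → ℤ) (π t.castSucc) :=
    hgv.trans (Finset.gcd_dvd (mem_univ t))
  rcases Fin.eq_castSucc_or_eq_last (π.symm (Fin.last n)) with ⟨t, ht⟩ | hlast
  · simpa [← ht] using hv t
  · refine Int.gcd_eq_one_iff.1 hgcd g hgd (Finset.dvd_gcd fun i _ => ?_)
    have hi : π.symm i.castSucc ≠ Fin.last n := by
      rw [← hlast, Ne, π.symm.injective.eq_iff]
      exact (Fin.castSucc_lt_last i).ne
    obtain ⟨t, ht⟩ := Fin.exists_castSucc_eq.2 hi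
    simpa [ht] using hv t

end Arithmetic

lemma modEq_of_dvd_snoc_neg_one_add_mul {n : ℕ} {d : ℤ} {a a' : Fin n → ℤ}
    {π : Equiv.Perm (Fin (n + 1))} (hπ : π (Fin.last n) ≠ Fin.last n)
    (h : ∀ t : Fin n, d ∣ (Fin.snoc (-a) 1 : Fin (n + 1) → ℤ) (π t.castSucc)
      + a' t * (Fin.snoc (-a) 1 : Fin (n + 1) → ℤ) (π (Fin.last n))) :
    (∀ t : Fin n, t.castSucc = π.symm (Fin.last n) →
        Int.ModEq d (a' t * (Fin.snoc a d : Fin (n + 1) → ℤ) (π (Fin.last n))) 1) ∧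
    (∀ t : Fin n, t.castSucc ≠ π.symm (Fin.last n) →
        Int.ModEq d (a' t * (Fin.snoc a d : Fin (n + 1) → ℤ) (π (Fin.last n)))
          (-(Fin.snoc a d : Fin (n + 1) → ℤ) (π t.castSucc))) := by
  have key (t : Fin n) : a' t * (Fin.snoc a d : Fin (n + 1) → ℤ) (π (Fin.last n)) ≡
      (Fin.snoc (-a) 1 : Fin (n + 1) → ℤ) (π t.castSucc) [ZMOD d] := by
    have ht := h t
    rwa [snoc_neg_one_eq_neg_snoc a d hπ, mul_neg, ← sub_eq_add_neg, ← Int.modEq_iff_dvd] at ht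
  refine ⟨fun t ht => ?_, fun t ht => ?_⟩
  · simpa [ht] using key t
  · have hπt : π t.castSucc ≠ Fin.last n := fun h' => ht (by rw [← h', π.symm_apply_apply])
    rw [← snoc_neg_one_eq_neg_snoc a d hπt]
    exact key t

theorem stmt9_general {n : ℕ} (d : ℤ) (hd : 1 < d)
    (a : Fin n → ℤ)
    (hgcd : Int.gcd d (Finset.univ.gcd a) = 1)
    (π : Equiv.Perm (Fin (n + 1))) :
    ((∃ (U : Matrix (Fin (n + 1)) (Fin (n + 1)) ℤ) (a' : Fin n → ℤ),
        (U.det = 1 ∨ U.det = -1) ∧ (∀ i, 0 ≤ a' i ∧ a' i < d) ∧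
        Int.gcd d (Finset.univ.gcd a') = 1 ∧
        U * Bcol d a = Bcol d a' * permMat π)
      ↔ (π (Fin.last n) = Fin.last n ∨
          Int.gcd ((Fin.snoc a d : Fin (n + 1) → ℤ) (π (Fin.last n))) d = 1))
    ∧ (∀ (U : Matrix (Fin (n + 1)) (Fin (n + 1)) ℤ) (a' : Fin n → ℤ),
        π (Fin.last n) ≠ Fin.last n →
        (U.det = 1 ∨ U.det = -1) → (∀ i, 0 ≤ a' i ∧ a' i < d) →
        Int.gcd d (Finset.univ.gcd a') = 1 →
        U * Bcol d a = Bcol d a' * permMat π →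
        (∀ t : Fin n, t.castSucc = π.symm (Fin.last n) →
            Int.ModEq d (a' t * (Fin.snoc a d : Fin (n + 1) → ℤ) (π (Fin.last n))) 1) ∧
        (∀ t : Fin n, t.castSucc ≠ π.symm (Fin.last n) →
            Int.ModEq d (a' t * (Fin.snoc a d : Fin (n + 1) → ℤ) (π (Fin.last n)))
              (-(Fin.snoc a d : Fin (n + 1) → ℤ) (π t.castSucc)))) := by
  have key (a' : Fin n → ℤ) :=
    exists_mul_Bcol_eq_Bcol_mul_permMat_iff (d := d) (a := a) (a' := a') (π := π)
  refine ⟨⟨?_, fun h => ?_⟩, fun U a' hπ _ _ _ hU =>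
    modEq_of_dvd_snoc_neg_one_add_mul hπ ((key a').1 ⟨U, hU⟩)⟩
  · rintro ⟨U, a', -, -, -, hU⟩
    rw [← isCoprime_snoc_neg_one_iff]
    exact isCoprime_last_of_dvd_add_mul
      (v := fun i => (Fin.snoc (-a) 1 : Fin (n + 1) → ℤ) (π i))
      ((key a').1 ⟨U, hU⟩) (j := π.symm (Fin.last n)) (by simp)
  · obtain ⟨a', ha', hdvd⟩ := exists_bounded_dvd_add_mul (by omega) _
      ((isCoprime_snoc_neg_one_iff a _).2 h)
    obtain ⟨U, hU⟩ := (key a').2 hdvd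
    have hdet := det_eq_sign_of_mul_Bcol_eq (by omega) hU
    exact ⟨U, a', Int.isUnit_iff.1 (hdet ▸ Units.isUnit _), ha',
      gcd_eq_one_of_dvd_add_mul (fun t _ => hdvd t)
        (gcd_snoc_neg_one_perm_castSucc_eq_one hgcd π), hU⟩

theorem stmt9 {n : ℕ} (hn : 1 ≤ n) (d : ℤ) (hd : 1 < d)
    (a : Fin n → ℤ) (ha : ∀ i, 0 ≤ a i ∧ a i < d)
    (hgcd : Int.gcd d (Finset.univ.gcd a) = 1)
    (π : Equiv.Perm (Fin (n + 1))) :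
    ((∃ (U : Matrix (Fin (n + 1)) (Fin (n + 1)) ℤ) (a' : Fin n → ℤ),
        (U.det = 1 ∨ U.det = -1) ∧ (∀ i, 0 ≤ a' i ∧ a' i < d) ∧
        Int.gcd d (Finset.univ.gcd a') = 1 ∧
        U * Bcol d a = Bcol d a' * permMat π)
      ↔ (π (Fin.last n) = Fin.last n ∨
          Int.gcd ((Fin.snoc a d : Fin (n + 1) → ℤ) (π (Fin.last n))) d = 1))
    ∧ (∀ (U : Matrix (Fin (n + 1)) (Fin (n + 1)) ℤ) (a' : Fin n → ℤ),
        π (Fin.last n) ≠ Fin.last n →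
        (U.det = 1 ∨ U.det = -1) → (∀ i, 0 ≤ a' i ∧ a' i < d) →
        Int.gcd d (Finset.univ.gcd a') = 1 →
        U * Bcol d a = Bcol d a' * permMat π →
        (∀ t : Fin n, t.castSucc = π.symm (Fin.last n) →
            Int.ModEq d (a' t * (Fin.snoc a d : Fin (n + 1) → ℤ) (π (Fin.last n))) 1) ∧
        (∀ t : Fin n, t.castSucc ≠ π.symm (Fin.last n) →
            Int.ModEq d (a' t * (Fin.snoc a d : Fin (n + 1) → ℤ) (π (Fin.last n)))
              (-(Fin.snoc a d : Fin (n + 1) → ℤ) (π t.castSucc)))) :=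
  stmt9_general d hd a hgcd π
end

section
/- Let B ∈ 𝒩𝒮_n and let C ∈ 𝒩𝒮_n satisfy CᵀB = diag(m(1),…,m(n)) with all m(i) > 0. Then for each i ∈ {1,…,n}, the class E_i + r(B) has additive order exactly m(i) in J(B) = ℤ^{1×n}/r(B), and likewise E_i + r(C) has additive order exactly m(i) in J(C) = ℤ^{1×n}/r(C). -/
open Matrix

/-!
Row `i` of `Cᵀ * B = diagonal m` says that the `i`-th column `c` of `C` satisfies
`c ᵥ* B = m i • E_i`, so `m i • E_i ∈ r(B)`. Conversely, if `v ᵥ* B = k • E_i` then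
`(m i • v) ᵥ* B = (k • c) ᵥ* B`; as `det B ≠ 0` this forces `m i • v = k • c`, and unimodularity
of `c` gives `m i ∣ k`. Transposing the hypothesis exchanges the roles of `B` and `C`.
-/

theorem addOrderOf_eq_natAbs_of_zsmul_eq_zero_iff {G : Type*} [AddGroup G] {x : G} {d : ℤ}
    (h : ∀ k : ℤ, k • x = 0 ↔ d ∣ k) : addOrderOf x = d.natAbs := by
  have hdvd : ∀ k : ℤ, (addOrderOf x : ℤ) ∣ k ↔ (d.natAbs : ℤ) ∣ k := fun k => by
    rw [addOrderOf_dvd_iff_zsmul_eq_zero, h, Int.natAbs_dvd]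
  exact Nat.dvd_antisymm (Int.natCast_dvd_natCast.mp ((hdvd _).2 dvd_rfl))
    (Int.natCast_dvd_natCast.mp ((hdvd _).1 dvd_rfl))

namespace Matrix

variable {n R : Type*} [Fintype n] [DecidableEq n] [CommRing R] [IsDomain R]

theorem vecMul_injective_of_det_ne_zero {B : Matrix n n R} (hB : B.det ≠ 0) :
    Function.Injective B.vecMul :=
  isRightRegular_iff_vecMul_injective.mp
    (isRegular_of_isLeftRegular_det (IsRegular.of_ne_zero hB).left).right

theorem det_ne_zero_of_mul_eq_diagonal {A B : Matrix n n R} {m : n → R} (hm : ∀ i, m i ≠ 0)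
    (h : A * B = diagonal m) : B.det ≠ 0 := by
  have hAB : (A * B).det ≠ 0 := by
    rw [h, det_diagonal]
    exact Finset.prod_ne_zero_iff.mpr fun i _ => hm i
  rw [det_mul] at hAB
  exact right_ne_zero_of_mul hAB

end Matrix

theorem single_mem_rowSpace_iff {n : ℕ} {B C : Matrix (Fin n) (Fin n) ℤ} {m : Fin n → ℤ}
    (hB : B.det ≠ 0) (h : Cᵀ * B = diagonal m) {i : Fin n}
    (hCi : Finset.univ.gcd (fun j => C j i) = 1) (k : ℤ) :
    Pi.single i k ∈ rowSpace B ↔ m i ∣ k := by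
  have hcol : Cᵀ i ᵥ* B = Pi.single i (m i) := by
    rw [← mul_apply_eq_vecMul, h]
    exact row_diagonal m i
  constructor
  · rintro ⟨v, hv⟩
    have hv' : v ᵥ* B = Pi.single i k := hv
    have hmv : m i • v = k • Cᵀ i := vecMul_injective_of_det_ne_zero hB <| by
      simp only [smul_vecMul, hv', hcol, ← Pi.single_smul, smul_eq_mul, mul_comm]
    have hdvd : m i ∣ Finset.univ.gcd fun j => k * C j i :=
      Finset.dvd_gcd fun j _ => ⟨v j, by simpa using (congrFun hmv j).symm⟩
    rwa [Finset.gcd_mul_left, hCi, mul_one, dvd_normalize_iff] at hdvd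
  · rintro ⟨c, rfl⟩
    refine ⟨c • Cᵀ i, ?_⟩
    simp only [vecMulLinear_apply, smul_vecMul, hcol, ← Pi.single_smul, smul_eq_mul, mul_comm]

theorem addOrderOf_mk_single_rowSpace {n : ℕ} {B C : Matrix (Fin n) (Fin n) ℤ} {m : Fin n → ℤ}
    (hm : ∀ i, m i ≠ 0) (h : Cᵀ * B = diagonal m) {i : Fin n}
    (hCi : Finset.univ.gcd (fun j => C j i) = 1) :
    addOrderOf (Submodule.Quotient.mk (Pi.single i (1 : ℤ)) : (Fin n → ℤ) ⧸ rowSpace B) =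
      (m i).natAbs := by
  refine addOrderOf_eq_natAbs_of_zsmul_eq_zero_iff fun k => ?_
  rw [← Submodule.Quotient.mk_smul, Submodule.Quotient.mk_eq_zero, ← Pi.single_smul, smul_eq_mul,
    mul_one]
  exact single_mem_rowSpace_iff (det_ne_zero_of_mul_eq_diagonal hm h) h hCi k

theorem stmt12 {n : ℕ} (B C : Matrix (Fin n) (Fin n) ℤ)
    (hB : WeaklyNonsingular B) (hC : WeaklyNonsingular C)
    (m : Fin n → ℤ) (hm : ∀ i, 0 < m i)
    (h : Cᵀ * B = Matrix.diagonal m) (i : Fin n) :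
    addOrderOf (Submodule.Quotient.mk (Pi.single i (1 : ℤ)) :
        (Fin n → ℤ) ⧸ rowSpace B) = (m i).toNat ∧
    addOrderOf (Submodule.Quotient.mk (Pi.single i (1 : ℤ)) :
        (Fin n → ℤ) ⧸ rowSpace C) = (m i).toNat := by
  have hm0 : ∀ j, m j ≠ 0 := fun j => (hm j).ne'
  have h' : Bᵀ * C = diagonal m := by
    simpa only [transpose_mul, transpose_transpose, diagonal_transpose] using congrArg transpose h
  rw [addOrderOf_mk_single_rowSpace hm0 h (hC.2 i), addOrderOf_mk_single_rowSpace hm0 h' (hB.2 i)]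
  have := hm i
  omega
end

section
/- Let s ≥ 1 be an integer and set M = (s+1)². In the ring ℚ⟦z⟧ of formal power series over ℚ, let A = (∏_{i=1}^{M−1}(1 − z^i)) · (1 + Σ_{j=1}^{s} z^{j²}·((1−z)(1−z²)⋯(1−z^j))^{−2}), where the inverses are taken in ℚ⟦z⟧ (each factor (1−z)(1−z²)⋯(1−z^j) is a unit, having constant term 1). Then the coefficient of z^0 in A equals 1, the coefficient of z^m in A equals 0 for every m with 1 ≤ m ≤ M+1, and the coefficient of z^{M+2} in A equals −1. -/
/-!
Write `P n = (z;z)_n = ∏_{i=1}^{n} (1 - z^i)`, `M = (s+1)²` and `N = M + 2`, and compare the truncated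
sum `Σ_{j ≤ s} z^{j²} / P j²` with the `q`-Vandermonde identity `[2N, N]_z = Σ_{j ≤ N} z^{j²} [N, j]_z²`.
Since `[N, j]_z ≡ 1 / P j` modulo `z^{N-j+1}`, the two sums agree modulo `z^{M+3}` except for the
term `z^M [N, s+1]_z²` (the terms with `j ≥ s + 2` have order `≥ (s+2)² ≥ M + 3`). Modulo `z^{M+3}`,
`P (M-1) · [2N, N]_z ≡ P (M-1) / P N = 1 / ((1 - z^M)(1 - z^{M+1})(1 - z^{M+2}))` is
`1 + z^M + z^{M+1} + z^{M+2}`, while modulo `z^3` every `P k` with `k ≥ 2` is `(1 - z)(1 - z²)`, so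
`P (M-1) · [N, s+1]_z² ≡ 1 / ((1 - z)(1 - z²)) ≡ 1 + z + 2z²`. Altogether
`A ≡ 1 - z^{M+2}` modulo `z^{M+3}`.
-/

/-- The series `(∏_{i=1}^{(s+1)²-1} (1 - z^i)) · (1 + Σ_{j=1}^{s} z^{j²}·((1-z)⋯(1-z^j))^{-2})`
in `ℚ⟦z⟧`. -/
noncomputable def seriesA (s : ℕ) : PowerSeries ℚ :=
  (∏ i ∈ Finset.Icc 1 ((s + 1) ^ 2 - 1), (1 - (PowerSeries.X : PowerSeries ℚ) ^ i)) *
    (1 + ∑ j ∈ Finset.Icc 1 s, (PowerSeries.X : PowerSeries ℚ) ^ (j ^ 2) *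
      ((∏ t ∈ Finset.Icc 1 j, (1 - (PowerSeries.X : PowerSeries ℚ) ^ t))⁻¹) ^ 2)

open Finset PowerSeries

section Congruence

variable {A : Type*} [CommRing A]

theorem smodEq_span_singleton_iff {a b d : A} : a ≡ b [SMOD Ideal.span {d}] ↔ d ∣ a - b := by
  rw [SModEq.sub_mem, Ideal.mem_span_singleton]

theorem SModEq.of_pow_le {x a b : A} {m n : ℕ} (h : a ≡ b [SMOD Ideal.span {x ^ n}])
    (hmn : m ≤ n) : a ≡ b [SMOD Ideal.span {x ^ m}] :=
  h.mono (Ideal.span_singleton_le_span_singleton.2 (pow_dvd_pow x hmn))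

theorem SModEq.mul_left_pow {x a b : A} {n : ℕ} (m : ℕ) (h : a ≡ b [SMOD Ideal.span {x ^ n}]) :
    x ^ m * a ≡ x ^ m * b [SMOD Ideal.span {x ^ (m + n)}] := by
  rw [smodEq_span_singleton_iff] at *
  rw [← mul_sub, pow_add]
  exact mul_dvd_mul_left _ h

theorem smodEq_of_mul_eq_one {I : Ideal A} {u u' v : A} (hu : u * u' = 1)
    (h : u * v ≡ 1 [SMOD I]) : u' ≡ v [SMOD I] :=
  calc u' = u' * 1 := (mul_one u').symm
    _ ≡ u' * (u * v) [SMOD I] := SModEq.rfl.mul h.symm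
    _ = v := by rw [← mul_assoc, mul_comm u', hu, one_mul]

theorem SModEq.of_mul_eq_one {I : Ideal A} {u u' v v' : A} (hu : u * u' = 1) (hv : v * v' = 1)
    (h : u ≡ v [SMOD I]) : u' ≡ v' [SMOD I] :=
  smodEq_of_mul_eq_one hu <|
    calc u * v' ≡ v * v' [SMOD I] := h.mul SModEq.rfl
      _ = 1 := hv

theorem one_sub_pow_smodEq_one (x : A) {m n : ℕ} (h : m ≤ n) :
    1 - x ^ n ≡ 1 [SMOD Ideal.span {x ^ m}] := by
  rw [smodEq_span_singleton_iff, sub_sub_cancel_left]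
  exact (pow_dvd_pow x h).neg_right

end Congruence

section GaussBinom

variable {R : Type*}

def qPochhammer [CommRing R] (q : R) (n : ℕ) : R :=
  ∏ i ∈ Icc 1 n, (1 - q ^ i)

def gaussBinom [CommSemiring R] (q : R) : ℕ → ℕ → R
  | _, 0 => 1
  | 0, _ + 1 => 0
  | n + 1, k + 1 => q ^ (k + 1) * gaussBinom q n (k + 1) + gaussBinom q n k

section CommSemiring

variable [CommSemiring R] (q : R)

@[simp]
theorem gaussBinom_zero_right (n : ℕ) : gaussBinom q n 0 = 1 := by
  cases n <;> rfl

@[simp]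
theorem gaussBinom_zero_succ (k : ℕ) : gaussBinom q 0 (k + 1) = 0 := rfl

theorem gaussBinom_succ_succ (n k : ℕ) :
    gaussBinom q (n + 1) (k + 1) = q ^ (k + 1) * gaussBinom q n (k + 1) + gaussBinom q n k :=
  rfl

theorem gaussBinom_eq_zero_of_lt {n k : ℕ} (h : n < k) : gaussBinom q n k = 0 := by
  induction n generalizing k with
  | zero => obtain ⟨k, rfl⟩ := Nat.exists_eq_succ_of_ne_zero h.ne'; rfl
  | succ n ih =>
    obtain ⟨k, rfl⟩ := Nat.exists_eq_succ_of_ne_zero (Nat.ne_zero_of_lt h)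
    rw [gaussBinom_succ_succ, ih (by omega), ih (by omega), mul_zero, add_zero]

/-- The `q`-Vandermonde identity. -/
theorem gaussBinom_add (m n k : ℕ) :
    gaussBinom q (m + n) k =
      ∑ p ∈ antidiagonal k, q ^ (p.1 * (n - p.2)) * gaussBinom q m p.1 * gaussBinom q n p.2 := by
  induction n generalizing k with
  | zero =>
    rw [sum_eq_single (k, 0)]
    · simp
    · rintro ⟨i, _ | j⟩ hp hne
      · simp_all
      · simp
    · simp
  | succ n ih =>
    rcases k with _ | k
    · simp
    have shift : ∀ p ∈ antidiagonal k,
        q ^ (k + 1) * (q ^ (p.1 * (n - (p.2 + 1))) * gaussBinom q m p.1 * gaussBinom q n (p.2 + 1))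
          = q ^ (p.1 * (n - p.2)) * gaussBinom q m p.1 *
              (q ^ (p.2 + 1) * gaussBinom q n (p.2 + 1)) := by
      rintro ⟨i, j⟩ hp
      rw [HasAntidiagonal.mem_antidiagonal] at hp
      subst hp
      rcases lt_or_ge n (j + 1) with hn | hn
      · simp [gaussBinom_eq_zero_of_lt q hn]
      obtain ⟨d, rfl⟩ := Nat.exists_eq_add_of_le hn
      simp only [Nat.add_sub_cancel_left, show j + 1 + d - j = d + 1 by omega]
      ring
    rw [← add_assoc, gaussBinom_succ_succ, ih, ih, Nat.sum_antidiagonal_succ',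
      Nat.sum_antidiagonal_succ', mul_add, mul_sum, sum_congr rfl shift]
    simp only [gaussBinom_succ_succ, gaussBinom_zero_right, Nat.add_sub_add_right, Nat.sub_zero,
      mul_add, sum_add_distrib]
    ring

end CommSemiring

section CommRing

variable [CommRing R] (q : R)

@[simp]
theorem qPochhammer_zero : qPochhammer q 0 = 1 := rfl

theorem qPochhammer_succ (n : ℕ) :
    qPochhammer q (n + 1) = qPochhammer q n * (1 - q ^ (n + 1)) :=
  prod_Icc_succ_top (by omega) _

theorem qPochhammer_smodEq {m n : ℕ} (h : m ≤ n) :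
    qPochhammer q n ≡ qPochhammer q m [SMOD Ideal.span {q ^ (m + 1)}] := by
  induction n, h using Nat.le_induction with
  | base => rfl
  | succ n hmn ih =>
    rw [qPochhammer_succ, ← mul_one (qPochhammer q m)]
    exact ih.mul (one_sub_pow_smodEq_one q (by omega))

theorem gaussBinom_mul_qPochhammer_mul {n k : ℕ} (h : k ≤ n) :
    gaussBinom q n k * qPochhammer q k * qPochhammer q (n - k) = qPochhammer q n := by
  induction n generalizing k with
  | zero => obtain rfl := Nat.le_zero.1 h; simp
  | succ n ih =>
    rcases k with _ | k
    · simp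
    rw [gaussBinom_succ_succ, Nat.add_sub_add_right]
    rcases (Nat.le_of_succ_le_succ h).lt_or_eq with hk | rfl
    · obtain ⟨d, rfl⟩ := Nat.exists_eq_add_of_lt hk
      have h1 := ih (k := k + 1) (by omega)
      have h2 := ih (k := k) (by omega)
      rw [show k + d + 1 - (k + 1) = d by omega, qPochhammer_succ q k] at h1
      rw [show k + d + 1 - k = d + 1 by omega, qPochhammer_succ] at h2
      rw [show k + d + 1 - k = d + 1 by omega, qPochhammer_succ q (k + d + 1),
        qPochhammer_succ q d, qPochhammer_succ q k]
      linear_combination (q ^ (k + 1) * (1 - q ^ (d + 1))) * h1 + (1 - q ^ (k + 1)) * h2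
    · have h1 := ih (k := k) le_rfl
      rw [Nat.sub_self, qPochhammer_zero, mul_one] at h1
      rw [gaussBinom_eq_zero_of_lt q (Nat.lt_succ_self k), Nat.sub_self, qPochhammer_zero, mul_one,
        qPochhammer_succ]
      linear_combination (1 - q ^ (k + 1)) * h1

end CommRing

end GaussBinom

section PowerSeries

theorem constantCoeff_qPochhammer_X {R : Type*} [CommRing R] (n : ℕ) :
    constantCoeff (qPochhammer (X : R⟦X⟧) n) = 1 := by
  simp only [qPochhammer, map_prod, map_sub, map_one, map_pow, constantCoeff_X]
  exact prod_eq_one fun i hi => by rw [zero_pow (by simp at hi; omega), sub_zero]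

theorem coeff_eq_of_smodEq {R : Type*} [CommRing R] {f g : R⟦X⟧} {m n : ℕ}
    (h : f ≡ g [SMOD Ideal.span {(X : R⟦X⟧) ^ n}]) (hm : m < n) : coeff m f = coeff m g := by
  rw [smodEq_span_singleton_iff, X_pow_dvd_iff] at h
  simpa [sub_eq_zero] using h m hm

variable {k : Type*} [Field k]

theorem qPochhammer_X_mul_inv (n : ℕ) : qPochhammer (X : k⟦X⟧) n * (qPochhammer X n)⁻¹ = 1 :=
  PowerSeries.mul_inv_cancel _ (by simp [constantCoeff_qPochhammer_X])

theorem gaussBinom_X_eq {n j : ℕ} (h : j ≤ n) :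
    gaussBinom (X : k⟦X⟧) n j =
      qPochhammer X n * (qPochhammer X j)⁻¹ * (qPochhammer X (n - j))⁻¹ := by
  have hprod := gaussBinom_mul_qPochhammer_mul (X : k⟦X⟧) h
  have hj := qPochhammer_X_mul_inv (k := k) j
  have hnj := qPochhammer_X_mul_inv (k := k) (n - j)
  set G := gaussBinom (X : k⟦X⟧) n j
  linear_combination ((qPochhammer X j)⁻¹ * (qPochhammer X (n - j))⁻¹) * hprod -
    (G * qPochhammer X (n - j) * (qPochhammer X (n - j))⁻¹) * hj - G * hnj

theorem gaussBinom_X_symm {n j : ℕ} (h : j ≤ n) :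
    gaussBinom (X : k⟦X⟧) n (n - j) = gaussBinom X n j := by
  rw [gaussBinom_X_eq (Nat.sub_le n j), gaussBinom_X_eq h, Nat.sub_sub_self h, mul_right_comm]

theorem gaussBinom_X_smodEq {n j : ℕ} (h : j ≤ n) :
    gaussBinom (X : k⟦X⟧) n j ≡ (qPochhammer X j)⁻¹ [SMOD Ideal.span {X ^ (n - j + 1)}] :=
  calc gaussBinom (X : k⟦X⟧) n j
      = qPochhammer X n * (qPochhammer X j)⁻¹ * (qPochhammer X (n - j))⁻¹ := gaussBinom_X_eq h
    _ ≡ qPochhammer X (n - j) * (qPochhammer X j)⁻¹ * (qPochhammer X (n - j))⁻¹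
        [SMOD Ideal.span {X ^ (n - j + 1)}] :=
      ((qPochhammer_smodEq X (Nat.sub_le n j)).mul SModEq.rfl).mul SModEq.rfl
    _ = (qPochhammer X j)⁻¹ := by rw [mul_right_comm, qPochhammer_X_mul_inv, one_mul]

theorem gaussBinom_X_add_self (n : ℕ) :
    gaussBinom (X : k⟦X⟧) (n + n) n = ∑ j ∈ range (n + 1), X ^ (j ^ 2) * gaussBinom X n j ^ 2 := by
  rw [gaussBinom_add, Nat.sum_antidiagonal_eq_sum_range_succ_mk]
  refine sum_congr rfl fun j hj => ?_
  have hjn : j ≤ n := Nat.lt_succ_iff.1 (mem_range.1 hj)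
  rw [Nat.sub_sub_self hjn, gaussBinom_X_symm hjn]
  ring

theorem sum_inv_sq_smodEq {s N : ℕ} (hsN : s < N) (hN : N < (s + 2) ^ 2) :
    ∑ j ∈ range (s + 1), X ^ (j ^ 2) * ((qPochhammer (X : k⟦X⟧) j)⁻¹) ^ 2 ≡
      gaussBinom X (N + N) N - X ^ ((s + 1) ^ 2) * gaussBinom X N (s + 1) ^ 2
      [SMOD Ideal.span {X ^ (N + 1)}] := by
  have head : ∀ j ∈ range (s + 1), X ^ (j ^ 2) * ((qPochhammer (X : k⟦X⟧) j)⁻¹) ^ 2 ≡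
      X ^ (j ^ 2) * gaussBinom X N j ^ 2 [SMOD Ideal.span {X ^ (N + 1)}] := by
    intro j hj
    have hjs : j ≤ s := Nat.lt_succ_iff.1 (mem_range.1 hj)
    have hj2 : j ≤ j ^ 2 := Nat.le_self_pow two_ne_zero j
    have hG : (qPochhammer (X : k⟦X⟧) j)⁻¹ ≡ gaussBinom X N j
        [SMOD Ideal.span {X ^ (N - j + 1)}] := (gaussBinom_X_smodEq (by omega)).symm
    exact ((hG.pow 2).mul_left_pow (j ^ 2)).of_pow_le (by omega)
  have tail : (X : k⟦X⟧) ^ (N + 1) ∣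
      ∑ j ∈ Ico (s + 1 + 1) (N + 1), X ^ (j ^ 2) * gaussBinom X N j ^ 2 := by
    refine dvd_sum fun j hj => dvd_mul_of_dvd_left (pow_dvd_pow X ?_) _
    have : (s + 2) ^ 2 ≤ j ^ 2 := Nat.pow_le_pow_left (mem_Ico.1 hj).1 2
    omega
  rw [gaussBinom_X_add_self, ← sum_range_add_sum_Ico _ (by omega : s + 1 ≤ N + 1),
    sum_eq_sum_Ico_succ_bot (by omega : s + 1 < N + 1)]
  refine (SModEq.sum head).trans (smodEq_span_singleton_iff.2 ?_)
  convert tail.neg_right using 1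
  ring

theorem qPochhammer_mul_gaussBinom_add_self_smodEq {m : ℕ} (hm : 2 ≤ m) :
    qPochhammer (X : k⟦X⟧) m * gaussBinom X (m + 3 + (m + 3)) (m + 3) ≡
      1 + X ^ (m + 1) + X ^ (m + 2) + X ^ (m + 3) [SMOD Ideal.span {X ^ (m + 4)}] := by
  set Q : k⟦X⟧ := (1 - X ^ (m + 1)) * (1 - X ^ (m + 2)) * (1 - X ^ (m + 3))
  have hP : qPochhammer (X : k⟦X⟧) (m + 3) = qPochhammer X m * Q := by
    simp only [Q, qPochhammer_succ]
    ring
  have hQ : Q * (qPochhammer X m * (qPochhammer X (m + 3))⁻¹) = 1 := by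
    rw [← mul_assoc, mul_comm Q, ← hP, qPochhammer_X_mul_inv]
  -- With `a = X^(m+1)` and `eᵢ` the elementary symmetric functions of `1, X, X²`,
  -- `Q = 1 - a e₁ + a² e₂ - a³ e₃` and the second factor is `1 + a e₁`.
  have hQinv : (X : k⟦X⟧) ^ (2 * m + 2) ∣ Q * (1 + X ^ (m + 1) + X ^ (m + 2) + X ^ (m + 3)) - 1 :=
    ⟨(X + X ^ 2 + X ^ 3) - (1 + X + X ^ 2) ^ 2 +
        X ^ (m + 1) * ((1 + X + X ^ 2) * (X + X ^ 2 + X ^ 3) - X ^ 3) -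
        X ^ (2 * m + 2) * (1 + X + X ^ 2) * X ^ 3, by simp only [Q]; ring⟩
  have hG : gaussBinom (X : k⟦X⟧) (m + 3 + (m + 3)) (m + 3) ≡ (qPochhammer X (m + 3))⁻¹
      [SMOD Ideal.span {X ^ (m + 3 + (m + 3) - (m + 3) + 1)}] :=
    gaussBinom_X_smodEq (by omega)
  exact (SModEq.rfl.mul (hG.of_pow_le (by omega))).trans (smodEq_of_mul_eq_one hQ
    ((smodEq_span_singleton_iff.2 hQinv).of_pow_le (by omega)))

theorem qPochhammer_mul_gaussBinom_sq_smodEq {m n j : ℕ} (hm : 2 ≤ m) (hj : 2 ≤ j)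
    (hjn : j + 2 ≤ n) :
    qPochhammer (X : k⟦X⟧) m * gaussBinom X n j ^ 2 ≡ 1 + X + 2 * X ^ 2
      [SMOD Ideal.span {X ^ 3}] := by
  have hP : qPochhammer (X : k⟦X⟧) m ≡ qPochhammer X 2 [SMOD Ideal.span {X ^ 3}] :=
    qPochhammer_smodEq X hm
  have hGj : gaussBinom (X : k⟦X⟧) n j ≡ (qPochhammer X j)⁻¹
      [SMOD Ideal.span {X ^ (n - j + 1)}] := gaussBinom_X_smodEq (by omega)
  have hPj : qPochhammer (X : k⟦X⟧) j ≡ qPochhammer X 2 [SMOD Ideal.span {X ^ 3}] :=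
    qPochhammer_smodEq X hj
  have hG : gaussBinom (X : k⟦X⟧) n j ≡ (qPochhammer X 2)⁻¹ [SMOD Ideal.span {X ^ 3}] :=
    (hGj.of_pow_le (by omega)).trans
      (hPj.of_mul_eq_one (qPochhammer_X_mul_inv j) (qPochhammer_X_mul_inv 2))
  have hP2 : qPochhammer (X : k⟦X⟧) 2 * (1 + X + 2 * X ^ 2) ≡ 1 [SMOD Ideal.span {X ^ 3}] :=
    smodEq_span_singleton_iff.2
      ⟨-2 - X + 2 * X ^ 2, by rw [qPochhammer_succ, qPochhammer_succ, qPochhammer_zero]; ring⟩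
  have hcancel : qPochhammer (X : k⟦X⟧) 2 * ((qPochhammer X 2)⁻¹) ^ 2 = (qPochhammer X 2)⁻¹ := by
    rw [sq, ← mul_assoc, qPochhammer_X_mul_inv, one_mul]
  refine (hP.mul (hG.pow 2)).trans ?_
  rw [hcancel]
  exact smodEq_of_mul_eq_one (qPochhammer_X_mul_inv 2) hP2

theorem qPochhammer_mul_sum_inv_sq_smodEq {s : ℕ} (hs : 1 ≤ s) :
    qPochhammer (X : k⟦X⟧) ((s + 1) ^ 2 - 1) *
        ∑ j ∈ range (s + 1), X ^ (j ^ 2) * ((qPochhammer X j)⁻¹) ^ 2 ≡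
      1 - X ^ ((s + 1) ^ 2 + 2) [SMOD Ideal.span {X ^ ((s + 1) ^ 2 + 3)}] := by
  obtain ⟨m, hm⟩ : ∃ m, (s + 1) ^ 2 = m + 1 :=
    ⟨_, (Nat.succ_pred_eq_of_pos (by positivity)).symm⟩
  have hm2 : 2 ≤ m := by nlinarith
  have hsum := sum_inv_sq_smodEq (k := k) (s := s) (N := m + 3) (by nlinarith) (by nlinarith)
  have hcentral := qPochhammer_mul_gaussBinom_add_self_smodEq (k := k) hm2
  have hoff := (qPochhammer_mul_gaussBinom_sq_smodEq (k := k) (n := m + 3) hm2 (j := s + 1)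
    (by omega) (by nlinarith)).mul_left_pow (m + 1)
  rw [hm] at hsum ⊢
  rw [Nat.add_sub_cancel]
  calc qPochhammer (X : k⟦X⟧) m * ∑ j ∈ range (s + 1), X ^ (j ^ 2) * ((qPochhammer X j)⁻¹) ^ 2
      ≡ qPochhammer (X : k⟦X⟧) m * (gaussBinom X (m + 3 + (m + 3)) (m + 3) -
          X ^ (m + 1) * gaussBinom X (m + 3) (s + 1) ^ 2)
        [SMOD Ideal.span {(X : k⟦X⟧) ^ (m + 1 + 3)}] := SModEq.rfl.mul hsum
    _ = qPochhammer (X : k⟦X⟧) m * gaussBinom X (m + 3 + (m + 3)) (m + 3) -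
          X ^ (m + 1) * (qPochhammer X m * gaussBinom X (m + 3) (s + 1) ^ 2) := by ring
    _ ≡ 1 + (X : k⟦X⟧) ^ (m + 1) + X ^ (m + 2) + X ^ (m + 3) - X ^ (m + 1) * (1 + X + 2 * X ^ 2)
        [SMOD Ideal.span {(X : k⟦X⟧) ^ (m + 1 + 3)}] := hcentral.sub hoff
    _ = 1 - X ^ (m + 1 + 2) := by ring

end PowerSeries

theorem seriesA_eq (s : ℕ) :
    seriesA s = qPochhammer X ((s + 1) ^ 2 - 1) *
      ∑ j ∈ range (s + 1), X ^ (j ^ 2) * ((qPochhammer X j)⁻¹) ^ 2 := by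
  rw [Nat.range_succ_eq_Icc_zero, Icc_eq_cons_Ioc (Nat.zero_le s), sum_cons,
    ← Icc_add_one_left_eq_Ioc]
  simp [seriesA, qPochhammer]

theorem stmt18 (s : ℕ) (hs : 1 ≤ s) :
    PowerSeries.coeff 0 (seriesA s) = 1 ∧
    (∀ m : ℕ, 1 ≤ m → m ≤ (s + 1) ^ 2 + 1 → PowerSeries.coeff m (seriesA s) = 0) ∧
    PowerSeries.coeff ((s + 1) ^ 2 + 2) (seriesA s) = -1 := by
  have h := qPochhammer_mul_sum_inv_sq_smodEq (k := ℚ) hs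
  rw [← seriesA_eq] at h
  refine ⟨?_, fun m hm1 hm2 => ?_, ?_⟩ <;> rw [coeff_eq_of_smodEq h (by omega)]
  · simp
  · simp [coeff_X_pow, show m ≠ 0 by omega, show m ≠ (s + 1) ^ 2 + 2 by omega]
  · simp [coeff_X_pow]
end

section
/- Fix an integer n ≥ 2. Call an n×n integer matrix C weakly terminal if C is upper triangular (C_{ij} = 0 for j < i), C_{jj} > 0 for all j, 0 ≤ C_{ij} < C_{jj} for all i < j, and every column of C is unimodular (the gcd of its entries is 1). Then for every positive integer d, the number of weakly terminal n×n matrices of determinant d equals (φ * J_2 * J_3 * ⋯ * J_{n−1})(d), where * is Dirichlet convolution, φ is Euler's totient, and J_k is the k-th Jordan totient J_k(m) = Σ_{e ∣ m} μ(m/e)·e^k (with μ the Möbius function; J_1 = φ). -/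
/-- An upper-triangular positive-diagonal reduced integer matrix with unimodular
columns ("weakly terminal"). -/
def WeaklyTerminal {n : ℕ} (C : Matrix (Fin n) (Fin n) ℤ) : Prop :=
  (∀ i j : Fin n, j < i → C i j = 0) ∧
  (∀ j : Fin n, 0 < C j j) ∧
  (∀ i j : Fin n, i < j → 0 ≤ C i j ∧ C i j < C j j) ∧
  (∀ j : Fin n, Finset.univ.gcd (fun i => C i j) = 1)

/-- Dirichlet convolution of two arithmetic functions (defined on positive inputs). -/
def dConv (f g : ℕ → ℤ) : ℕ → ℤ := fun m => ∑ e ∈ m.divisors, f e * g (m / e)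

/-- The `k`-th Jordan totient `J_k(m) = Σ_{e ∣ m} μ(m/e) e^k`. -/
def jordan (k : ℕ) : ℕ → ℤ := fun m =>
  ∑ e ∈ m.divisors, ArithmeticFunction.moebius (m / e) * (e : ℤ) ^ k

/-- `phiJ n = φ * J_2 * J_3 * ⋯ * J_{n-1}` (Dirichlet convolution), for `n ≥ 2`. -/
def phiJ : ℕ → ℕ → ℤ
  | 0 => fun m => if m = 1 then 1 else 0
  | 1 => fun m => if m = 1 then 1 else 0
  | 2 => fun m => (Nat.totient m : ℤ)
  | (k + 3) => dConv (phiJ (k + 2)) (jordan (k + 2))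

/-!
Deleting the last row and column of a weakly terminal `(n+1)×(n+1)` matrix of determinant
`d` leaves a weakly terminal `n×n` matrix of determinant `e ∣ d`, and the deleted column is
`(a, d/e)` with `a` a tuple of residues modulo `m = d/e` such that `gcd(a, m) = 1`; conversely every
such pair borders back to a weakly terminal matrix. By Möbius inversion over the common divisors
of `a` and `m` there are `J_n(m)` such tuples, so the counts `c_n` satisfy `c_{n+1} = c_n * J_n`.
Starting from the empty matrix, `c_0 = c_1 = δ` and `c_2 = J_1 = φ`.
-/

open Finset ArithmeticFunction
open scoped ArithmeticFunction.Moebius Nat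

lemma dConv_congr_left {f f' : ℕ → ℤ} (g : ℕ → ℤ) {d : ℕ}
    (h : ∀ e ∈ d.divisors, f e = f' e) : dConv f g d = dConv f' g d :=
  sum_congr rfl fun e he => by rw [h e he]

lemma dConv_one_left (g : ℕ → ℤ) {d : ℕ} (hd : d ≠ 0) :
    dConv (fun m => if m = 1 then 1 else 0) g d = g d := by
  simp [dConv, ite_mul, hd]

lemma jordan_eq_sum_divisorsAntidiagonal (k m : ℕ) :
    jordan k m = ∑ x ∈ m.divisorsAntidiagonal, (μ x.1 : ℤ) * (x.2 : ℤ) ^ k :=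
  (Nat.sum_divisorsAntidiagonal' (fun a b => (μ a : ℤ) * (b : ℤ) ^ k)).symm

lemma jordan_eq_of_sum_divisors {k : ℕ} {f : ℕ → ℤ}
    (hf : ∀ m : ℕ, 0 < m → ∑ i ∈ m.divisors, f i = (m : ℤ) ^ k) {m : ℕ} (hm : 0 < m) :
    jordan k m = f m := by
  rw [jordan_eq_sum_divisorsAntidiagonal, ← sum_eq_iff_sum_mul_moebius_eq.mp hf m hm]
  simp only [Int.cast_id]

lemma jordan_zero {m : ℕ} (hm : 0 < m) : jordan 0 m = if m = 1 then 1 else 0 :=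
  jordan_eq_of_sum_divisors (f := fun m => if m = 1 then 1 else 0)
    (fun m hm => by simp [hm.ne']) hm

lemma jordan_one {m : ℕ} (hm : 0 < m) : jordan 1 m = φ m :=
  jordan_eq_of_sum_divisors (f := fun m => (φ m : ℤ))
    (fun m _ => by simp only [pow_one]; exact_mod_cast Nat.sum_totient m) hm

lemma ite_eq_one_eq_sum_moebius {m g : ℕ} (hm : m ≠ 0) (hg : g ∣ m) :
    (if g = 1 then 1 else 0 : ℤ) = ∑ e ∈ m.divisors, if e ∣ g then (μ e : ℤ) else 0 := by
  rw [← sum_filter, Nat.divisors_filter_dvd_of_dvd hm hg, ← coe_mul_zeta_apply,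
    moebius_mul_coe_zeta, one_apply]

lemma Finset.univ_gcd_snoc {α : Type*} [CommMonoidWithZero α] [NormalizedGCDMonoid α]
    {k : ℕ} (f : Fin k → α) (x : α) :
    univ.gcd (Fin.snoc f x : Fin (k + 1) → α) = GCDMonoid.gcd x (univ.gcd f) := by
  rw [Fin.univ_castSuccEmb, cons_eq_insert, gcd_insert, Fin.snoc_last, map_eq_image, gcd_image]
  congr 1
  exact gcd_congr rfl fun i _ => by simp

noncomputable def coprimeTuples (k : ℕ) (m : ℤ) : Finset (Fin k → ℤ) :=
  {a ∈ Fintype.piFinset fun _ => Ico 0 m | univ.gcd (Fin.snoc a m : Fin (k + 1) → ℤ) = 1}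

lemma ite_gcd_snoc_eq_sum_moebius {k m : ℕ} (hm : m ≠ 0) (a : Fin k → ℤ) :
    (if univ.gcd (Fin.snoc a m : Fin (k + 1) → ℤ) = 1 then 1 else 0 : ℤ) =
      ∑ e ∈ m.divisors, if ∀ i, (e : ℤ) ∣ a i then (μ e : ℤ) else 0 := by
  set G := univ.gcd (Fin.snoc a m : Fin (k + 1) → ℤ)
  have hG : G = 1 ↔ G.natAbs = 1 := by
    have : 0 ≤ G := Int.nonneg_of_normalize_eq_self Finset.normalize_gcd
    omega
  have hdvd (e : ℕ) : e ∣ G.natAbs ↔ e ∣ m ∧ ∀ i, (e : ℤ) ∣ a i := by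
    rw [← Int.natCast_dvd, Finset.dvd_gcd_iff]
    simp [Fin.forall_fin_succ', and_comm, Int.natCast_dvd_natCast]
  simp only [hG]
  rw [ite_eq_one_eq_sum_moebius hm ((hdvd _).mp dvd_rfl).1]
  refine sum_congr rfl fun e he => ?_
  simp [hdvd, Nat.dvd_of_mem_divisors he]

lemma card_filter_forall_dvd {k m e : ℕ} (he : e ∣ m) (he0 : e ≠ 0) :
    #{a ∈ Fintype.piFinset (fun _ : Fin k => Ico (0 : ℤ) m) | ∀ i, (e : ℤ) ∣ a i} =
      (m / e) ^ k := by
  have hfilter : {a ∈ Fintype.piFinset (fun _ : Fin k => Ico (0 : ℤ) m) | ∀ i, (e : ℤ) ∣ a i} =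
      Fintype.piFinset fun _ => {x ∈ Ico (0 : ℤ) m | (e : ℤ) ∣ x} := by
    ext a
    simp [forall_and]
  have hcount : #{x ∈ Ico (0 : ℤ) m | (e : ℤ) ∣ x} = m / e := by
    have := Int.Ico_filter_dvd_card 0 (m : ℤ) (r := e) (by positivity)
    obtain ⟨c, rfl⟩ := he
    simp [he0] at this ⊢
    omega
  rw [hfilter, Fintype.card_piFinset, prod_const, card_univ, Fintype.card_fin, hcount]

lemma card_coprimeTuples (k : ℕ) {m : ℕ} (hm : m ≠ 0) :
    (#(coprimeTuples k m) : ℤ) = jordan k m := by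
  rw [coprimeTuples, natCast_card_filter]
  simp_rw [ite_gcd_snoc_eq_sum_moebius hm]
  rw [sum_comm, jordan_eq_sum_divisorsAntidiagonal,
    Nat.sum_divisorsAntidiagonal (fun a b => (μ a : ℤ) * (b : ℤ) ^ k)]
  refine sum_congr rfl fun e he => ?_
  rw [← sum_filter, sum_const, card_filter_forall_dvd (Nat.dvd_of_mem_divisors he)
    (Nat.pos_of_mem_divisors he).ne', nsmul_eq_mul, mul_comm, Nat.cast_pow]

theorem Nat.card_subtype_mul_eq {X Y : Type*} (f : X → ℤ) (g : Y → ℤ)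
    (hf : ∀ x, 0 < f x) (hg : ∀ y, 0 < g y)
    [∀ e : ℤ, Finite {x // f x = e}] [∀ e : ℤ, Finite {y // g y = e}] (d : ℕ) :
    Nat.card {p : X × Y // f p.1 * g p.2 = d} =
      ∑ q ∈ d.divisorsAntidiagonal, Nat.card {x // f x = q.1} * Nat.card {y // g y = q.2} := by
  let F (p : {p : X × Y // f p.1 * g p.2 = d}) : d.divisorsAntidiagonal :=
    ⟨((f p.1.1).toNat, (g p.1.2).toNat), by
      have hx := hf p.1.1
      have hy := hg p.1.2
      rw [Nat.mem_divisorsAntidiagonal, ← Nat.cast_inj (R := ℤ), Nat.cast_mul,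
        Int.toNat_of_nonneg hx.le, Int.toNat_of_nonneg hy.le, p.2]
      exact ⟨rfl, by rintro rfl; exact (mul_pos hx hy).ne' p.2⟩⟩
  let fiber (q : d.divisorsAntidiagonal) :
      {p // F p = q} ≃ {x // f x = q.1.1} × {y // g y = q.1.2} :=
    { toFun p := (⟨p.1.1.1, by
          have h : (f p.1.1.1).toNat = q.1.1 := congrArg (·.1.1) p.2
          have := hf p.1.1.1; omega⟩,
        ⟨p.1.1.2, by
          have h : (g p.1.1.2).toNat = q.1.2 := congrArg (·.1.2) p.2
          have := hg p.1.1.2; omega⟩)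
      invFun xy := ⟨⟨(xy.1.1, xy.2.1), by
        rw [xy.1.2, xy.2.2]; exact_mod_cast (Nat.mem_divisorsAntidiagonal.mp q.2).1⟩, by
        ext <;> simp [F, xy.1.2, xy.2.2]⟩
      left_inv _ := rfl
      right_inv _ := rfl }
  rw [Nat.card_congr ((Equiv.sigmaFiberEquiv F).symm.trans (Equiv.sigmaCongrRight fiber)),
    Nat.card_sigma]
  simp only [Nat.card_prod]
  exact sum_coe_sort _ fun q : ℕ × ℕ => Nat.card {x // f x = q.1} * Nat.card {y // g y = q.2}

section Bordered
variable {α : Type*} {n : ℕ}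

/-- The block matrix `!![B, a; 0, m]`. -/
def Matrix.bordered [Zero α] (B : Matrix (Fin n) (Fin n) α) (a : Fin n → α) (m : α) :
    Matrix (Fin (n + 1)) (Fin (n + 1)) α :=
  Matrix.of fun i j =>
    (Fin.snoc (fun j => Fin.snoc (B · j) 0) (Fin.snoc a m) : Fin (n + 1) → Fin (n + 1) → α) j i

namespace Matrix

section
variable [Zero α] (B : Matrix (Fin n) (Fin n) α) (a : Fin n → α) (m : α)

@[simp] lemma bordered_castSucc_castSucc (i j : Fin n) :
    bordered B a m i.castSucc j.castSucc = B i j := by simp [bordered]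
@[simp] lemma bordered_last_castSucc (j : Fin n) :
    bordered B a m (Fin.last n) j.castSucc = 0 := by simp [bordered]
@[simp] lemma bordered_castSucc_last (i : Fin n) :
    bordered B a m i.castSucc (Fin.last n) = a i := by simp [bordered]
@[simp] lemma bordered_last_last : bordered B a m (Fin.last n) (Fin.last n) = m := by
  simp [bordered]

@[simp] lemma submatrix_bordered :
    (bordered B a m).submatrix Fin.castSucc Fin.castSucc = B := by
  ext; simp

lemma bordered_col_castSucc (j : Fin n) :
    (fun i => bordered B a m i j.castSucc) = Fin.snoc (B · j) 0 := by
  simp [bordered]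

lemma bordered_col_last : (fun i => bordered B a m i (Fin.last n)) = Fin.snoc a m := by
  simp [bordered]

end

lemma det_bordered {R : Type*} [CommRing R] (B : Matrix (Fin n) (Fin n) R) (a : Fin n → R)
    (m : R) : (bordered B a m).det = B.det * m := by
  rw [det_succ_row _ (Fin.last n), Fin.sum_univ_castSucc]
  simp [Fin.succAbove_last, mul_comm]

end Matrix
end Bordered

namespace WeaklyTerminal
variable {n : ℕ} {C : Matrix (Fin n) (Fin n) ℤ}

lemma det_eq_prod_diag (h : WeaklyTerminal C) : C.det = ∏ j, C j j :=
  Matrix.det_of_isUpperTriangular fun i j hij => h.1 i j hij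

lemma det_pos (h : WeaklyTerminal C) : 0 < C.det :=
  h.det_eq_prod_diag ▸ prod_pos fun j _ => h.2.1 j

lemma nonneg (h : WeaklyTerminal C) (i j : Fin n) : 0 ≤ C i j := by
  rcases lt_trichotomy i j with hij | rfl | hij
  · exact (h.2.2.1 i j hij).1
  · exact (h.2.1 i).le
  · exact (h.1 i j hij).ge

lemma le_det (h : WeaklyTerminal C) (i j : Fin n) : C i j ≤ C.det := by
  have hdiag : C j j ≤ C.det :=
    Int.le_of_dvd h.det_pos (h.det_eq_prod_diag ▸ dvd_prod_of_mem _ (mem_univ j))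
  rcases lt_trichotomy i j with hij | rfl | hij
  · exact (h.2.2.1 i j hij).2.le.trans hdiag
  · exact hdiag
  · exact (h.1 i j hij).trans_le h.det_pos.le

lemma bordered_submatrix {C : Matrix (Fin (n + 1)) (Fin (n + 1)) ℤ} (h : WeaklyTerminal C) :
    (C.submatrix Fin.castSucc Fin.castSucc).bordered (fun i => C i.castSucc (Fin.last n))
      (C (Fin.last n) (Fin.last n)) = C := by
  ext i j
  induction i using Fin.lastCases <;> induction j using Fin.lastCases <;>
    simp [h.1 _ _ (Fin.castSucc_lt_last _)]

end WeaklyTerminal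

instance finite_weaklyTerminal_det (n : ℕ) (d : ℤ) :
    Finite {C : Matrix (Fin n) (Fin n) ℤ // WeaklyTerminal C ∧ C.det = d} := by
  refine Set.Finite.subset (Set.Finite.pi fun _ => Set.Finite.pi fun _ => Set.finite_Icc 0 d) ?_
  rintro C ⟨h, rfl⟩
  simp only [Set.mem_pi, Set.mem_univ, Set.mem_Icc, forall_const]
  exact fun i j => ⟨h.nonneg i j, h.le_det i j⟩

lemma weaklyTerminal_bordered_iff {n : ℕ} {B : Matrix (Fin n) (Fin n) ℤ} {a : Fin n → ℤ}
    {m : ℤ} :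
    WeaklyTerminal (B.bordered a m) ↔ WeaklyTerminal B ∧ 0 < m ∧ a ∈ coprimeTuples n m := by
  have hlast (i : Fin n) : ¬ Fin.last n < i.castSucc := (Fin.castSucc_lt_last i).not_gt
  simp only [WeaklyTerminal, Fin.forall_fin_succ', hlast, Matrix.bordered_castSucc_castSucc,
    Matrix.bordered_last_castSucc, Matrix.bordered_castSucc_last, Matrix.bordered_last_last,
    Fin.castSucc_lt_castSucc_iff, Fin.castSucc_lt_last, Matrix.bordered_col_castSucc,
    Matrix.bordered_col_last, univ_gcd_snoc, gcd_zero_left, Finset.normalize_gcd, coprimeTuples,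
    mem_filter, Fintype.mem_piFinset, mem_Ico, lt_self_iff_false, false_implies, implies_true,
    true_implies, and_true, forall_and]
  tauto

lemma WeaklyTerminal.submatrix_and_lastCol {n : ℕ} {C : Matrix (Fin (n + 1)) (Fin (n + 1)) ℤ}
    (h : WeaklyTerminal C) :
    WeaklyTerminal (C.submatrix Fin.castSucc Fin.castSucc) ∧ 0 < C (Fin.last n) (Fin.last n) ∧
      (fun i => C i.castSucc (Fin.last n)) ∈ coprimeTuples n (C (Fin.last n) (Fin.last n)) :=
  weaklyTerminal_bordered_iff.mp (by rwa [h.bordered_submatrix])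

abbrev CoprimeColumn (n : ℕ) : Type :=
  {p : (Fin n → ℤ) × ℤ // 0 < p.2 ∧ p.1 ∈ coprimeTuples n p.2}

def borderEquiv (n : ℕ) :
    {C : Matrix (Fin (n + 1)) (Fin (n + 1)) ℤ // WeaklyTerminal C} ≃
      {B : Matrix (Fin n) (Fin n) ℤ // WeaklyTerminal B} × CoprimeColumn n where
  toFun C := (⟨_, C.2.submatrix_and_lastCol.1⟩, ⟨(_, _), C.2.submatrix_and_lastCol.2⟩)
  invFun x := ⟨x.1.1.bordered x.2.1.1 x.2.1.2, weaklyTerminal_bordered_iff.mpr ⟨x.1.2, x.2.2⟩⟩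
  left_inv C := Subtype.ext C.2.bordered_submatrix
  right_inv x := by ext <;> simp

def CoprimeColumn.fiberEquiv (n : ℕ) {m : ℤ} (hm : 0 < m) :
    {c : CoprimeColumn n // c.1.2 = m} ≃ coprimeTuples n m where
  toFun c := ⟨c.1.1.1, by simpa only [c.2] using c.1.2.2⟩
  invFun a := ⟨⟨(a.1, m), hm, a.2⟩, rfl⟩
  left_inv := by rintro ⟨⟨⟨a, _⟩, _, _⟩, rfl⟩; rfl
  right_inv _ := rfl

instance (n : ℕ) (m : ℤ) : Finite {c : CoprimeColumn n // c.1.2 = m} :=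
  Finite.of_injective (fun c => (⟨c.1.1.1, by simpa only [c.2] using c.1.2.2⟩ : coprimeTuples n m))
    fun c c' h =>
      Subtype.ext <| Subtype.ext <| Prod.ext (congrArg Subtype.val h) (c.2.trans c'.2.symm)

lemma card_weaklyTerminal_succ (n d : ℕ) :
    (Nat.card {C : Matrix (Fin (n + 1)) (Fin (n + 1)) ℤ // WeaklyTerminal C ∧ C.det = d} : ℤ) =
      dConv (fun e => Nat.card {B : Matrix (Fin n) (Fin n) ℤ // WeaklyTerminal B ∧ B.det = e})
        (jordan n) d := by
  have (e : ℤ) : Finite {B : {B : Matrix (Fin n) (Fin n) ℤ // WeaklyTerminal B} // B.1.det = e} :=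
    .of_equiv _ (Equiv.subtypeSubtypeEquivSubtypeInter _
      fun B : Matrix (Fin n) (Fin n) ℤ => B.det = e).symm
  rw [← Nat.card_congr (Equiv.subtypeSubtypeEquivSubtypeInter _
      fun C : Matrix (Fin (n + 1)) (Fin (n + 1)) ℤ => C.det = d),
    ← Nat.card_congr ((borderEquiv n).symm.subtypeEquiv fun x => by
      rw [borderEquiv, Equiv.coe_fn_symm_mk, Matrix.det_bordered]),
    Nat.card_subtype_mul_eq
      (fun B : {B : Matrix (Fin n) (Fin n) ℤ // WeaklyTerminal B} => B.1.det)
      (fun c : CoprimeColumn n => c.1.2) (fun B => B.2.det_pos) (fun c => c.2.1), dConv,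
    ← Nat.sum_divisorsAntidiagonal fun e m =>
      (Nat.card {B : Matrix (Fin n) (Fin n) ℤ // WeaklyTerminal B ∧ B.det = e} : ℤ) * jordan n m]
  push_cast
  refine sum_congr rfl fun q hq => ?_
  have hm : q.2 ≠ 0 :=
    (Nat.pos_of_mem_divisors (Nat.snd_mem_divisors_of_mem_antidiagonal hq)).ne'
  rw [Nat.card_congr (Equiv.subtypeSubtypeEquivSubtypeInter _
      fun B : Matrix (Fin n) (Fin n) ℤ => B.det = q.1),
    Nat.card_congr (CoprimeColumn.fiberEquiv n (by positivity)), Nat.card_eq_finsetCard,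
    card_coprimeTuples n hm]

lemma card_weaklyTerminal_zero (d : ℕ) :
    (Nat.card {C : Matrix (Fin 0) (Fin 0) ℤ // WeaklyTerminal C ∧ C.det = d} : ℤ) =
      if d = 1 then 1 else 0 := by
  have hWT (C : Matrix (Fin 0) (Fin 0) ℤ) : WeaklyTerminal C := by simp [WeaklyTerminal]
  have hd : (1 : ℤ) = d ↔ d = 1 := by omega
  split_ifs <;> simp_all [Matrix.det_isEmpty]

lemma card_weaklyTerminal_eq_phiJ :
    ∀ (n : ℕ) {d : ℕ}, 0 < d →
      (Nat.card {C : Matrix (Fin n) (Fin n) ℤ // WeaklyTerminal C ∧ C.det = d} : ℤ) = phiJ n d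
  | 0, d, _ => card_weaklyTerminal_zero d
  | 1, d, hd => by
    simp only [card_weaklyTerminal_succ, card_weaklyTerminal_zero, dConv_one_left _ hd.ne',
      jordan_zero hd, phiJ]
  | 2, d, hd => by
    rw [card_weaklyTerminal_succ, dConv_congr_left _ fun e he =>
      card_weaklyTerminal_eq_phiJ 1 (Nat.pos_of_mem_divisors he)]
    simp only [phiJ, dConv_one_left _ hd.ne', jordan_one hd]
  | k + 3, d, hd => by
    rw [card_weaklyTerminal_succ, phiJ]
    exact dConv_congr_left _ fun e he =>
      card_weaklyTerminal_eq_phiJ (k + 2) (Nat.pos_of_mem_divisors he)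

theorem stmt19_general {n : ℕ} (d : ℕ) (hd : 0 < d) :
    (Nat.card {C : Matrix (Fin n) (Fin n) ℤ // WeaklyTerminal C ∧ C.det = (d : ℤ)} : ℤ)
      = phiJ n d :=
  card_weaklyTerminal_eq_phiJ n hd

theorem stmt19 {n : ℕ} (hn : 2 ≤ n) (d : ℕ) (hd : 0 < d) :
    (Nat.card {C : Matrix (Fin n) (Fin n) ℤ // WeaklyTerminal C ∧ C.det = (d : ℤ)} : ℤ)
      = phiJ n d :=
  stmt19_general d hd
end
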